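/- arXiv:1901.02841 — 6 statements merged into one kernel-verified Lean document; each statement's English description precedes it below -/
import Mathlib

section
/- Let K>0 and let g,h,b:ℝ→ℝ be continuous with g(x)²+h(x)² ≤ K(1+|x|) and |b(x)| ≤ K(1+|x|) for all x∈ℝ. Let (μ_t)_{t≥0} be a weakly continuous family of Borel probability measures on ℝ such that for every f ∈ C_b²(ℝ) and every t ≥ 0, ⟨μ_t,f⟩ = ⟨μ_0,f⟩ + ∫_0^t ∫_ℝ b(x)f'(x) μ_s(dx) ds + ∫_0^t ∬_{ℝ²} Δf(x,y)·(g(x)²h(y)²+g(y)²h(x)²)/2 · μ_s(dx)μ_s(dy) ds. Then for every z ∈ ℂ with Im(z) > 0, the map t ↦ ∫_ℝ (x−z)^{-1} μ_t(dx) is differentiable on (0,∞) and d/dt ∫_ℝ (x−z)^{-1} μ_t(dx) = −∫_ℝ b(x)(x−z)^{-2} μ_t(dx) + (∫_ℝ g(x)²(x−z)^{-1} μ_t(dx))(∫_ℝ h(y)²(y−z)^{-2} μ_t(dy)) + (∫_ℝ g(x)²(x−z)^{-2} μ_t(dx))(∫_ℝ h(y)²(y−z)^{-1} μ_t(dy)).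 -/
/-!
Test the integral equation against `x ↦ L (x - z)⁻¹` for every real-linear functional `L` on `ℂ`;
these functions lie in `C_b²(ℝ)` because `Im z > 0`. For such a test function
`Δf(x, y) = (x - z)⁻¹ (y - z)⁻² + (x - z)⁻² (y - z)⁻¹` has separated variables, so the double
integral factorises into products of single integrals; these converge because the resolvent decays
like `1 / |x|` and thus absorbs the linear growth of `g², h², b`. Weak continuity makes the
resulting drift continuous in time, and the fundamental theorem of calculus gives the derivative.
-/

open MeasureTheory Filter Set

/-- The difference quotient of the derivative: `Δf(x,y) = (f'(x)-f'(y))/(x-y)` for `x ≠ y`,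
and `Δf(x,x) = f''(x)`. -/
noncomputable def deltaF (f : ℝ → ℝ) (x y : ℝ) : ℝ :=
  if x = y then deriv (deriv f) x else (deriv f x - deriv f y) / (x - y)

/-- `C_b²(ℝ)`: twice continuously differentiable with `f`, `f'`, `f''` bounded. -/
def CbTwo (f : ℝ → ℝ) : Prop :=
  ContDiff ℝ 2 f ∧ ∃ C : ℝ, ∀ x : ℝ,
    |f x| ≤ C ∧ |deriv f x| ≤ C ∧ |deriv (deriv f) x| ≤ C

section Resolvent

variable {z : ℂ}

lemma ofReal_sub_ne_zero (hz : 0 < z.im) (x : ℝ) : (x : ℂ) - z ≠ 0 := by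
  intro h
  simpa [hz.ne'] using congrArg Complex.im h

lemma im_le_norm_ofReal_sub (x : ℝ) : z.im ≤ ‖(x : ℂ) - z‖ := by
  simpa using (neg_le_abs _).trans (Complex.abs_im_le_norm ((x : ℂ) - z))

lemma norm_inv_ofReal_sub_le (hz : 0 < z.im) (x : ℝ) : ‖((x : ℂ) - z)⁻¹‖ ≤ z.im⁻¹ := by
  rw [norm_inv]
  exact inv_anti₀ hz (im_le_norm_ofReal_sub x)

lemma norm_inv_ofReal_sub_pow_le (hz : 0 < z.im) (x : ℝ) (n : ℕ) :
    ‖(((x : ℂ) - z) ^ n)⁻¹‖ ≤ z.im⁻¹ ^ n := by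
  rw [← inv_pow, norm_pow]
  exact pow_le_pow_left₀ (norm_nonneg _) (norm_inv_ofReal_sub_le hz x) n

lemma one_add_abs_mul_norm_inv_ofReal_sub_le (hz : 0 < z.im) (x : ℝ) :
    (1 + |x|) * ‖((x : ℂ) - z)⁻¹‖ ≤ (1 + ‖z‖) / z.im + 1 := by
  have hpos : 0 < ‖(x : ℂ) - z‖ := norm_pos_iff.2 (ofReal_sub_ne_zero hz x)
  have habs : |x| ≤ ‖z‖ + ‖(x : ℂ) - z‖ := by
    simpa using norm_le_norm_add_norm_sub' (x : ℂ) z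
  rw [norm_inv]
  calc (1 + |x|) * ‖(x : ℂ) - z‖⁻¹ ≤ (1 + ‖z‖ + ‖(x : ℂ) - z‖) * ‖(x : ℂ) - z‖⁻¹ :=
        mul_le_mul_of_nonneg_right (by linarith) (by positivity)
    _ = (1 + ‖z‖) / ‖(x : ℂ) - z‖ + 1 := by field_simp
    _ ≤ (1 + ‖z‖) / z.im + 1 := by
        gcongr
        exact im_le_norm_ofReal_sub x

lemma continuous_inv_ofReal_sub (hz : 0 < z.im) : Continuous fun x : ℝ => ((x : ℂ) - z)⁻¹ :=
  (Complex.continuous_ofReal.sub continuous_const).inv₀ (ofReal_sub_ne_zero hz)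

lemma continuous_inv_ofReal_sub_sq (hz : 0 < z.im) :
    Continuous fun x : ℝ => (((x : ℂ) - z) ^ 2)⁻¹ :=
  ((Complex.continuous_ofReal.sub continuous_const).pow 2).inv₀
    fun x => pow_ne_zero 2 (ofReal_sub_ne_zero hz x)

lemma integrable_inv_ofReal_sub (hz : 0 < z.im) {ν : Measure ℝ} [IsFiniteMeasure ν] :
    Integrable (fun x : ℝ => ((x : ℂ) - z)⁻¹) ν :=
  .of_bound (continuous_inv_ofReal_sub hz).aestronglyMeasurable _
    (ae_of_all _ (norm_inv_ofReal_sub_le hz))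

end Resolvent

section LinearGrowth

variable {z : ℂ} {K : ℝ} {φ : ℝ → ℂ}

lemma norm_mul_inv_ofReal_sub_le (hz : 0 < z.im) (hφ : ∀ x, ‖φ x‖ ≤ K * (1 + |x|)) (x : ℝ) :
    ‖φ x * ((x : ℂ) - z)⁻¹‖ ≤ K * ((1 + ‖z‖) / z.im + 1) := by
  have hK : 0 ≤ K := by simpa using (norm_nonneg _).trans (hφ 0)
  rw [norm_mul]
  calc ‖φ x‖ * ‖((x : ℂ) - z)⁻¹‖ ≤ K * (1 + |x|) * ‖((x : ℂ) - z)⁻¹‖ := by gcongr; exact hφ x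
    _ ≤ K * ((1 + ‖z‖) / z.im + 1) := by
        rw [mul_assoc]
        gcongr
        exact one_add_abs_mul_norm_inv_ofReal_sub_le hz x

lemma norm_mul_inv_ofReal_sub_sq_le (hz : 0 < z.im) (hφ : ∀ x, ‖φ x‖ ≤ K * (1 + |x|)) (x : ℝ) :
    ‖φ x * (((x : ℂ) - z) ^ 2)⁻¹‖ ≤ K * ((1 + ‖z‖) / z.im + 1) * z.im⁻¹ := by
  have h := norm_mul_inv_ofReal_sub_le hz hφ x
  rw [← inv_pow, sq, ← mul_assoc, norm_mul]
  exact mul_le_mul h (norm_inv_ofReal_sub_le hz x) (norm_nonneg _) ((norm_nonneg _).trans h)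

lemma integrable_mul_inv_ofReal_sub (hz : 0 < z.im) {ν : Measure ℝ} [IsFiniteMeasure ν]
    (hφc : Continuous φ) (hφ : ∀ x, ‖φ x‖ ≤ K * (1 + |x|)) :
    Integrable (fun x : ℝ => φ x * ((x : ℂ) - z)⁻¹) ν :=
  .of_bound (hφc.mul (continuous_inv_ofReal_sub hz)).aestronglyMeasurable _
    (ae_of_all _ (norm_mul_inv_ofReal_sub_le hz hφ))

lemma integrable_mul_inv_ofReal_sub_sq (hz : 0 < z.im) {ν : Measure ℝ} [IsFiniteMeasure ν]
    (hφc : Continuous φ) (hφ : ∀ x, ‖φ x‖ ≤ K * (1 + |x|)) :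
    Integrable (fun x : ℝ => φ x * (((x : ℂ) - z) ^ 2)⁻¹) ν :=
  .of_bound (hφc.mul (continuous_inv_ofReal_sub_sq hz)).aestronglyMeasurable _
    (ae_of_all _ (norm_mul_inv_ofReal_sub_sq_le hz hφ))

end LinearGrowth

def IsWeaklyContinuous (μ : ℝ → Measure ℝ) : Prop :=
  ∀ f : ℝ → ℝ, Continuous f → (∃ C : ℝ, ∀ x, |f x| ≤ C) → Continuous fun t : ℝ => ∫ x, f x ∂(μ t)

section WeakContinuity

variable {μ : ℝ → Measure ℝ} [∀ t, IsFiniteMeasure (μ t)] (hweak : IsWeaklyContinuous μ)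
include hweak

lemma IsWeaklyContinuous.continuous_integral {φ : ℝ → ℂ} (hφ : Continuous φ) {C : ℝ}
    (hC : ∀ x, ‖φ x‖ ≤ C) :
    Continuous fun t => ∫ x, φ x ∂(μ t) := by
  have hint : ∀ t, Integrable φ (μ t) := fun t =>
    .of_bound hφ.aestronglyMeasurable C (ae_of_all _ hC)
  have hre : Continuous fun t => (∫ x, φ x ∂(μ t)).re :=
    (hweak _ (Complex.continuous_re.comp hφ)
      ⟨C, fun x => (Complex.abs_re_le_norm _).trans (hC x)⟩).congr fun t => integral_re (hint t)
  have him : Continuous fun t => (∫ x, φ x ∂(μ t)).im :=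
    (hweak _ (Complex.continuous_im.comp hφ)
      ⟨C, fun x => (Complex.abs_im_le_norm _).trans (hC x)⟩).congr fun t => integral_im (hint t)
  exact ((Complex.continuous_ofReal.comp hre).add
    ((Complex.continuous_ofReal.comp him).mul continuous_const)).congr fun t => Complex.re_add_im _

variable {z : ℂ} {K : ℝ} {φ : ℝ → ℂ}

lemma IsWeaklyContinuous.continuous_integral_mul_inv_ofReal_sub (hz : 0 < z.im)
    (hφc : Continuous φ) (hφ : ∀ x, ‖φ x‖ ≤ K * (1 + |x|)) :
    Continuous fun t => ∫ x, φ x * ((x : ℂ) - z)⁻¹ ∂(μ t) :=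
  hweak.continuous_integral (hφc.mul (continuous_inv_ofReal_sub hz))
    (norm_mul_inv_ofReal_sub_le hz hφ)

lemma IsWeaklyContinuous.continuous_integral_mul_inv_ofReal_sub_sq (hz : 0 < z.im)
    (hφc : Continuous φ) (hφ : ∀ x, ‖φ x‖ ≤ K * (1 + |x|)) :
    Continuous fun t => ∫ x, φ x * (((x : ℂ) - z) ^ 2)⁻¹ ∂(μ t) :=
  hweak.continuous_integral (hφc.mul (continuous_inv_ofReal_sub_sq hz))
    (norm_mul_inv_ofReal_sub_sq_le hz hφ)

end WeakContinuity

lemma ContinuousLinearMap.map_mul_ofReal (L : ℂ →L[ℝ] ℝ) (w : ℂ) (r : ℝ) :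
    L (w * r) = L w * r := by
  rw [mul_comm w, ← Complex.real_smul, L.map_smul, smul_eq_mul, mul_comm]

section TestFunction

variable {z : ℂ}

lemma hasDerivAt_inv_ofReal_sub {x : ℝ} (hx : (x : ℂ) - z ≠ 0) :
    HasDerivAt (fun x : ℝ => ((x : ℂ) - z)⁻¹) (-(((x : ℂ) - z) ^ 2)⁻¹) x :=
  ((hasDerivAt_inv hx).comp_sub_const (x : ℂ) z).comp_ofReal

lemma hasDerivAt_neg_inv_ofReal_sub_sq {x : ℝ} (hx : (x : ℂ) - z ≠ 0) :
    HasDerivAt (fun x : ℝ => -(((x : ℂ) - z) ^ 2)⁻¹) (2 * (((x : ℂ) - z) ^ 3)⁻¹) x := by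
  have hsq : HasDerivAt (fun w : ℂ => (w - z) ^ 2) (2 * ((x : ℂ) - z)) (x : ℂ) := by
    simpa using ((hasDerivAt_id (x : ℂ)).sub_const z).fun_pow 2
  refine ((hsq.inv (pow_ne_zero 2 hx)).neg.congr_deriv ?_).comp_ofReal
  field_simp

variable (L : ℂ →L[ℝ] ℝ)

lemma deriv_comp_inv_ofReal_sub (hz : 0 < z.im) :
    deriv (fun x : ℝ => L ((x : ℂ) - z)⁻¹) = fun x : ℝ => L (-(((x : ℂ) - z) ^ 2)⁻¹) :=
  funext fun x =>
    (L.hasFDerivAt.comp_hasDerivAt x (hasDerivAt_inv_ofReal_sub (ofReal_sub_ne_zero hz x))).deriv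

lemma deriv_deriv_comp_inv_ofReal_sub (hz : 0 < z.im) :
    deriv (deriv fun x : ℝ => L ((x : ℂ) - z)⁻¹) = fun x : ℝ => L (2 * (((x : ℂ) - z) ^ 3)⁻¹) := by
  rw [deriv_comp_inv_ofReal_sub L hz]
  exact funext fun x => (L.hasFDerivAt.comp_hasDerivAt x
    (hasDerivAt_neg_inv_ofReal_sub_sq (ofReal_sub_ne_zero hz x))).deriv

lemma cbTwo_comp_inv_ofReal_sub (hz : 0 < z.im) : CbTwo fun x : ℝ => L ((x : ℂ) - z)⁻¹ := by
  set a := z.im⁻¹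
  have ha : 0 ≤ a := inv_nonneg.2 hz.le
  have hL : ∀ w c, ‖w‖ ≤ c → |L w| ≤ ‖L‖ * c := fun w c hw =>
    (L.le_opNorm w).trans (mul_le_mul_of_nonneg_left hw (norm_nonneg L))
  have h2 : 0 ≤ a ^ 2 := pow_nonneg ha 2
  have h3 : 0 ≤ a ^ 3 := pow_nonneg ha 3
  refine ⟨L.contDiff.comp ((Complex.ofRealCLM.contDiff.sub contDiff_const).inv
    (ofReal_sub_ne_zero hz)), ‖L‖ * (a + a ^ 2 + 2 * a ^ 3), fun x => ⟨?_, ?_, ?_⟩⟩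
  · refine hL _ _ ((norm_inv_ofReal_sub_le hz x).trans ?_)
    linarith
  · rw [deriv_comp_inv_ofReal_sub L hz]
    refine hL _ _ ?_
    rw [norm_neg]
    refine (norm_inv_ofReal_sub_pow_le hz x 2).trans ?_
    linarith
  · rw [deriv_deriv_comp_inv_ofReal_sub L hz]
    refine hL _ _ ?_
    rw [norm_mul, Complex.norm_ofNat]
    have := norm_inv_ofReal_sub_pow_le hz x 3
    linarith

lemma deltaF_comp_inv_ofReal_sub (hz : 0 < z.im) (x y : ℝ) :
    deltaF (fun x : ℝ => L ((x : ℂ) - z)⁻¹) x y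
      = L (((x : ℂ) - z)⁻¹ * (((y : ℂ) - z) ^ 2)⁻¹ + (((x : ℂ) - z) ^ 2)⁻¹ * ((y : ℂ) - z)⁻¹) := by
  have hx := ofReal_sub_ne_zero hz x
  have hy := ofReal_sub_ne_zero hz y
  rcases eq_or_ne x y with rfl | hxy
  · rw [deltaF, if_pos rfl, deriv_deriv_comp_inv_ofReal_sub L hz]
    dsimp only
    generalize (x : ℂ) - z = w
    congr 1
    ring
  · have hxy' : (x : ℂ) - y ≠ 0 := sub_ne_zero.2 (Complex.ofReal_injective.ne hxy)
    rw [deltaF, if_neg hxy, deriv_comp_inv_ofReal_sub L hz, ← map_sub, div_eq_mul_inv,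
      ← L.map_mul_ofReal]
    congr 1
    push_cast
    field_simp
    ring

end TestFunction

noncomputable def resolventInteraction (g h : ℝ → ℝ) (z : ℂ) (ν : Measure ℝ) : ℂ :=
  (∫ x, (g x : ℂ) ^ 2 * ((x : ℂ) - z)⁻¹ ∂ν) * (∫ y, (h y : ℂ) ^ 2 * (((y : ℂ) - z) ^ 2)⁻¹ ∂ν)
    + (∫ x, (g x : ℂ) ^ 2 * (((x : ℂ) - z) ^ 2)⁻¹ ∂ν) * (∫ y, (h y : ℂ) ^ 2 * ((y : ℂ) - z)⁻¹ ∂ν)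

section Generator

variable {z : ℂ} (L : ℂ →L[ℝ] ℝ) {ν : Measure ℝ}

lemma integral_mul_deriv_comp_inv_ofReal_sub (hz : 0 < z.im) {b : ℝ → ℝ}
    (hb : Integrable (fun x : ℝ => (b x : ℂ) * (((x : ℂ) - z) ^ 2)⁻¹) ν) :
    ∫ x, b x * deriv (fun x : ℝ => L ((x : ℂ) - z)⁻¹) x ∂ν
      = L (-∫ x, (b x : ℂ) * (((x : ℂ) - z) ^ 2)⁻¹ ∂ν) := by
  rw [deriv_comp_inv_ofReal_sub L hz, ← integral_neg, ← L.integral_comp_comm hb.fun_neg]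
  refine integral_congr_ae (ae_of_all _ fun x => ?_)
  dsimp only
  rw [mul_comm, ← L.map_mul_ofReal, neg_mul, mul_comm]

lemma integral_integral_deltaF_comp_inv_ofReal_sub (hz : 0 < z.im) [SFinite ν] {g h : ℝ → ℝ}
    (hg₁ : Integrable (fun x : ℝ => (g x : ℂ) ^ 2 * ((x : ℂ) - z)⁻¹) ν)
    (hg₂ : Integrable (fun x : ℝ => (g x : ℂ) ^ 2 * (((x : ℂ) - z) ^ 2)⁻¹) ν)
    (hh₁ : Integrable (fun x : ℝ => (h x : ℂ) ^ 2 * ((x : ℂ) - z)⁻¹) ν)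
    (hh₂ : Integrable (fun x : ℝ => (h x : ℂ) ^ 2 * (((x : ℂ) - z) ^ 2)⁻¹) ν) :
    ∫ x, ∫ y, deltaF (fun x : ℝ => L ((x : ℂ) - z)⁻¹) x y
        * (g x ^ 2 * h y ^ 2 + g y ^ 2 * h x ^ 2) / 2 ∂ν ∂ν
      = L (resolventInteraction g h z ν) := by
  set G₁ := fun x : ℝ => (g x : ℂ) ^ 2 * ((x : ℂ) - z)⁻¹
  set G₂ := fun x : ℝ => (g x : ℂ) ^ 2 * (((x : ℂ) - z) ^ 2)⁻¹
  set H₁ := fun x : ℝ => (h x : ℂ) ^ 2 * ((x : ℂ) - z)⁻¹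
  set H₂ := fun x : ℝ => (h x : ℂ) ^ 2 * (((x : ℂ) - z) ^ 2)⁻¹
  set k : ℝ × ℝ → ℂ := fun p => G₁ p.1 * H₂ p.2 + G₂ p.1 * H₁ p.2
  have hk : Integrable k (ν.prod ν) := (hg₁.mul_prod hh₂).add (hg₂.mul_prod hh₁)
  have hk' : Integrable (fun p => k p.swap) (ν.prod ν) := hk.swap
  have hK : Integrable (fun p => (k p + k p.swap) / 2) (ν.prod ν) := (hk.add hk').div_const 2
  have hpt : ∀ x y, deltaF (fun x : ℝ => L ((x : ℂ) - z)⁻¹) x y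
      * (g x ^ 2 * h y ^ 2 + g y ^ 2 * h x ^ 2) / 2 = L ((k (x, y) + k (y, x)) / 2) := by
    intro x y
    rw [deltaF_comp_inv_ofReal_sub L hz, mul_div_assoc, ← L.map_mul_ofReal]
    congr 1
    simp only [k, G₁, G₂, H₁, H₂]
    push_cast
    ring
  -- The kernel is the symmetrisation of `k`, whose two halves have the same integral by Fubini.
  calc _ = ∫ x, ∫ y, L ((k (x, y) + k (y, x)) / 2) ∂ν ∂ν := by simp only [hpt]
    _ = ∫ p, L ((k p + k p.swap) / 2) ∂ν.prod ν := integral_integral (L.integrable_comp hK)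
    _ = L ((∫ p, k p ∂ν.prod ν + ∫ p, k p.swap ∂ν.prod ν) / 2) := by
        rw [L.integral_comp_comm hK, integral_div, integral_add hk hk']
    _ = L (∫ p, k p ∂ν.prod ν) := by rw [integral_prod_swap, add_self_div_two]
    _ = _ := by
        rw [integral_add (hg₁.mul_prod hh₂) (hg₂.mul_prod hh₁), integral_prod_mul G₁ H₂,
          integral_prod_mul G₂ H₁]
        rfl

end Generator

def SolvesIntegralEquation (b g h : ℝ → ℝ) (μ : ℝ → Measure ℝ) : Prop :=
  ∀ f : ℝ → ℝ, CbTwo f → ∀ t : ℝ, 0 ≤ t →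
    ∫ x, f x ∂(μ t) = ∫ x, f x ∂(μ 0)
      + (∫ s in (0:ℝ)..t, ∫ x, b x * deriv f x ∂(μ s))
      + ∫ s in (0:ℝ)..t, ∫ x, ∫ y,
          deltaF f x y * (g x ^ 2 * h y ^ 2 + g y ^ 2 * h x ^ 2) / 2 ∂(μ s) ∂(μ s)

lemma SolvesIntegralEquation.integral_inv_ofReal_sub_eq {b g h : ℝ → ℝ} {μ : ℝ → Measure ℝ}
    [∀ t, IsFiniteMeasure (μ t)] (heq : SolvesIntegralEquation b g h μ) {z : ℂ} (hz : 0 < z.im)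
    {K : ℝ} (hgc : Continuous fun x => (g x : ℂ) ^ 2) (hhc : Continuous fun x => (h x : ℂ) ^ 2)
    (hbc : Continuous fun x => (b x : ℂ))
    (hgK : ∀ x, ‖(g x : ℂ) ^ 2‖ ≤ K * (1 + |x|)) (hhK : ∀ x, ‖(h x : ℂ) ^ 2‖ ≤ K * (1 + |x|))
    (hbK : ∀ x, ‖(b x : ℂ)‖ ≤ K * (1 + |x|))
    (hB : Continuous fun s => ∫ x, (b x : ℂ) * (((x : ℂ) - z) ^ 2)⁻¹ ∂(μ s))
    (hP : Continuous fun s => resolventInteraction g h z (μ s)) {τ : ℝ} (hτ : 0 ≤ τ) :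
    ∫ x, ((x : ℂ) - z)⁻¹ ∂(μ τ) = ∫ x, ((x : ℂ) - z)⁻¹ ∂(μ 0)
      + (∫ s in (0:ℝ)..τ, -∫ x, (b x : ℂ) * (((x : ℂ) - z) ^ 2)⁻¹ ∂(μ s))
      + ∫ s in (0:ℝ)..τ, resolventInteraction g h z (μ s) := by
  refine (SeparatingDual.eq_iff_forall_dual_eq (R := ℝ)).2 fun L => ?_
  have hres : ∀ s, ∫ x, L ((x : ℂ) - z)⁻¹ ∂(μ s) = L (∫ x, ((x : ℂ) - z)⁻¹ ∂(μ s)) := fun s =>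
    L.integral_comp_comm (integrable_inv_ofReal_sub hz)
  have hdrift := fun s => integral_mul_deriv_comp_inv_ofReal_sub L (ν := μ s) hz
    (integrable_mul_inv_ofReal_sub_sq hz hbc hbK)
  have hquad := fun s => integral_integral_deltaF_comp_inv_ofReal_sub L (ν := μ s) hz
    (integrable_mul_inv_ofReal_sub hz hgc hgK) (integrable_mul_inv_ofReal_sub_sq hz hgc hgK)
    (integrable_mul_inv_ofReal_sub hz hhc hhK) (integrable_mul_inv_ofReal_sub_sq hz hhc hhK)
  have := heq _ (cbTwo_comp_inv_ofReal_sub L hz) τ hτ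
  simp only [hres, hdrift, hquad] at this
  rw [this, map_add, map_add, L.intervalIntegral_comp_comm (hB.fun_neg.intervalIntegrable 0 τ),
    L.intervalIntegral_comp_comm (hP.intervalIntegrable 0 τ)]

theorem stmt2_general (K : ℝ)
    (g h b : ℝ → ℝ) (hg : Continuous g) (hh : Continuous h) (hb : Continuous b)
    (hgh : ∀ x : ℝ, g x ^ 2 + h x ^ 2 ≤ K * (1 + |x|))
    (hbb : ∀ x : ℝ, |b x| ≤ K * (1 + |x|))
    (μ : ℝ → Measure ℝ) (hprob : ∀ t, IsProbabilityMeasure (μ t))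
    -- weak continuity of the family `(μ t)`
    (hweakcont : ∀ f : ℝ → ℝ, Continuous f → (∃ C : ℝ, ∀ x, |f x| ≤ C) →
      Continuous fun t : ℝ => ∫ x, f x ∂(μ t))
    -- the limiting integral equation (β = 2, Hermitian case)
    (heq : ∀ f : ℝ → ℝ, CbTwo f → ∀ t : ℝ, 0 ≤ t →
      ∫ x, f x ∂(μ t) = ∫ x, f x ∂(μ 0)
        + (∫ s in (0:ℝ)..t, ∫ x, b x * deriv f x ∂(μ s))
        + ∫ s in (0:ℝ)..t, ∫ x, ∫ y,
            deltaF f x y * (g x ^ 2 * h y ^ 2 + g y ^ 2 * h x ^ 2) / 2 ∂(μ s) ∂(μ s)) :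
    ∀ z : ℂ, 0 < z.im → ∀ t : ℝ, 0 < t →
      HasDerivAt (fun τ : ℝ => ∫ x : ℝ, ((x : ℂ) - z)⁻¹ ∂(μ τ))
        (-(∫ x : ℝ, (b x : ℂ) * (((x : ℂ) - z) ^ 2)⁻¹ ∂(μ t))
          + (∫ x : ℝ, ((g x : ℂ)) ^ 2 * ((x : ℂ) - z)⁻¹ ∂(μ t))
            * (∫ y : ℝ, ((h y : ℂ)) ^ 2 * (((y : ℂ) - z) ^ 2)⁻¹ ∂(μ t))
          + (∫ x : ℝ, ((g x : ℂ)) ^ 2 * (((x : ℂ) - z) ^ 2)⁻¹ ∂(μ t))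
            * (∫ y : ℝ, ((h y : ℂ)) ^ 2 * ((y : ℂ) - z)⁻¹ ∂(μ t))) t := by
  intro z hz t ht
  have hweak : IsWeaklyContinuous μ := hweakcont
  have hgK : ∀ x, ‖(g x : ℂ) ^ 2‖ ≤ K * (1 + |x|) := fun x => by
    simpa using (le_add_of_nonneg_right (sq_nonneg (h x))).trans (hgh x)
  have hhK : ∀ x, ‖(h x : ℂ) ^ 2‖ ≤ K * (1 + |x|) := fun x => by
    simpa using (le_add_of_nonneg_left (sq_nonneg (g x))).trans (hgh x)
  have hbK : ∀ x, ‖(b x : ℂ)‖ ≤ K * (1 + |x|) := fun x => by simpa using hbb x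
  have hgc : Continuous fun x => (g x : ℂ) ^ 2 := (Complex.continuous_ofReal.comp hg).pow 2
  have hhc : Continuous fun x => (h x : ℂ) ^ 2 := (Complex.continuous_ofReal.comp hh).pow 2
  have hbc : Continuous fun x => (b x : ℂ) := Complex.continuous_ofReal.comp hb
  have hB := hweak.continuous_integral_mul_inv_ofReal_sub_sq hz hbc hbK
  have hP : Continuous fun s => resolventInteraction g h z (μ s) :=
    ((hweak.continuous_integral_mul_inv_ofReal_sub hz hgc hgK).mul
      (hweak.continuous_integral_mul_inv_ofReal_sub_sq hz hhc hhK)).add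
    ((hweak.continuous_integral_mul_inv_ofReal_sub_sq hz hgc hgK).mul
      (hweak.continuous_integral_mul_inv_ofReal_sub hz hhc hhK))
  have hFTC := (((hB.fun_neg.integral_hasStrictDerivAt 0 t).hasDerivAt.const_add
    (∫ x, ((x : ℂ) - z)⁻¹ ∂(μ 0))).add (hP.integral_hasStrictDerivAt 0 t).hasDerivAt)
  refine (hFTC.congr_of_eventuallyEq ?_).congr_deriv (add_assoc _ _ _).symm
  filter_upwards [Ioi_mem_nhds ht] with τ hτ
  exact SolvesIntegralEquation.integral_inv_ofReal_sub_eq heq hz hgc hhc hbc hgK hhK hbK hB hP hτ.le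

theorem stmt2 (K : ℝ) (hK : 0 < K)
    (g h b : ℝ → ℝ) (hg : Continuous g) (hh : Continuous h) (hb : Continuous b)
    (hgh : ∀ x : ℝ, g x ^ 2 + h x ^ 2 ≤ K * (1 + |x|))
    (hbb : ∀ x : ℝ, |b x| ≤ K * (1 + |x|))
    (μ : ℝ → Measure ℝ) (hprob : ∀ t, IsProbabilityMeasure (μ t))
    -- weak continuity of the family `(μ t)`
    (hweakcont : ∀ f : ℝ → ℝ, Continuous f → (∃ C : ℝ, ∀ x, |f x| ≤ C) →
      Continuous fun t : ℝ => ∫ x, f x ∂(μ t))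
    -- the limiting integral equation (β = 2, Hermitian case)
    (heq : ∀ f : ℝ → ℝ, CbTwo f → ∀ t : ℝ, 0 ≤ t →
      ∫ x, f x ∂(μ t) = ∫ x, f x ∂(μ 0)
        + (∫ s in (0:ℝ)..t, ∫ x, b x * deriv f x ∂(μ s))
        + ∫ s in (0:ℝ)..t, ∫ x, ∫ y,
            deltaF f x y * (g x ^ 2 * h y ^ 2 + g y ^ 2 * h x ^ 2) / 2 ∂(μ s) ∂(μ s)) :
    ∀ z : ℂ, 0 < z.im → ∀ t : ℝ, 0 < t →
      HasDerivAt (fun τ : ℝ => ∫ x : ℝ, ((x : ℂ) - z)⁻¹ ∂(μ τ))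
        (-(∫ x : ℝ, (b x : ℂ) * (((x : ℂ) - z) ^ 2)⁻¹ ∂(μ t))
          + (∫ x : ℝ, ((g x : ℂ)) ^ 2 * ((x : ℂ) - z)⁻¹ ∂(μ t))
            * (∫ y : ℝ, ((h y : ℂ)) ^ 2 * (((y : ℂ) - z) ^ 2)⁻¹ ∂(μ t))
          + (∫ x : ℝ, ((g x : ℂ)) ^ 2 * (((x : ℂ) - z) ^ 2)⁻¹ ∂(μ t))
            * (∫ y : ℝ, ((h y : ℂ)) ^ 2 * ((y : ℂ) - z)⁻¹ ∂(μ t))) t :=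
  stmt2_general K g h b hg hh hb hgh hbb μ hprob hweakcont heq
end

section
/- Let α ∈ [0,1) and set λ = (1+α)/2 and λ* = (1−α)/2. Let (ν_t)_{t≥0} be Borel probability measures on ℝ with ν_0 = δ_0 and ν_t((0,∞)) = 1 for all t > 0, with finite first moments locally bounded in t, satisfying for every f ∈ C_b²(ℝ) the equation ⟨ν_t,f⟩ = f(0) + ∫_0^t ∫_ℝ f'(x) ν_s(dx) ds + (1/2) ∫_0^t ∬_{ℝ²} Δf(x,y)·(x+y) ν_s(dx)ν_s(dy) ds. Let ν̄_t denote the reflection of ν_t, i.e. ν̄_t(A) := ν_t(−A) for Borel sets A, and define μ_t := λ·ν_{λt} + λ*·ν̄_{λ*t}. Then (μ_t)_{t≥0} is a family of probability measures with μ_0 = δ_0 that satisfies, for every f ∈ C_b²(ℝ) and t ≥ 0, ⟨μ_t,f⟩ = f(0) + α ∫_0^t ∫_ℝ f'(x) μ_s(dx) ds + (1/2) ∫_0^t ∬_{ℝ²} Δf(x,y)·(|x|+|y|) μ_s(dx)μ_s(dy) ds, and μ_t((−∞,0)) = λ* > 0 for every t > 0. -/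
/-!
On the support of `μ_t` the first component lives on `(0, ∞)` and the reflected one on
`(-∞, 0)`. There the kernel `|x| + |y|` is `x + y` on the two diagonal blocks and `±(x - y)`
across them, where `Δf(x,y) (x - y) = f'(x) - f'(y)` turns the interaction into a drift.
Testing the equation of `ν` against `f` at time `λt` and against `f(-·)` at time `λ*t` and
rescaling time, the drift terms recombine through `λ² = αλ + λλ*` and `λ*² = -αλ* + λλ*`,
which is the equation of `μ` with drift `α = λ - λ*`.
-/

open MeasureTheory Filter Set

open Topology

section DeltaF

variable {f : ℝ → ℝ}

lemma abs_deriv_sub_deriv_le (hf : ContDiff ℝ 2 f) {C : ℝ}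
    (hC : ∀ x, |deriv (deriv f) x| ≤ C) (x y : ℝ) :
    |deriv f x - deriv f y| ≤ C * |x - y| := by
  simpa [Real.norm_eq_abs] using
    Convex.norm_image_sub_le_of_norm_deriv_le (𝕜 := ℝ) (s := univ)
      (fun z _ => hf.differentiable_deriv_two z) (fun z _ => by simpa using hC z)
      convex_univ trivial trivial

lemma abs_deltaF_le (hf : ContDiff ℝ 2 f) {C : ℝ} (hC : ∀ x, |deriv (deriv f) x| ≤ C)
    (x y : ℝ) : |deltaF f x y| ≤ C := by
  unfold deltaF
  split_ifs with h
  · exact hC x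
  · rw [abs_div, div_le_iff₀ (abs_pos.mpr (sub_ne_zero.mpr h))]
    exact abs_deriv_sub_deriv_le hf hC x y

lemma abs_deltaF_mul_le (hf : ContDiff ℝ 2 f) {C : ℝ} (hC : ∀ x, |deriv (deriv f) x| ≤ C)
    {x y u : ℝ} (hu : |u| ≤ |x| + |y|) : |deltaF f x y * u| ≤ C * (|x| + |y|) := by
  rw [abs_mul]
  exact mul_le_mul (abs_deltaF_le hf hC x y) hu (abs_nonneg u)
    ((abs_nonneg _).trans (abs_deltaF_le hf hC x y))

lemma measurable_deltaF (hf : ContDiff ℝ 2 f) : Measurable (Function.uncurry (deltaF f)) := by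
  have h1 : Measurable (deriv f) := (hf.continuous_deriv (by norm_num)).measurable
  have h2 : Measurable (deriv (deriv f)) :=
    ((show ContDiff ℝ (1 + 1) f from hf).deriv'.continuous_deriv le_rfl).measurable
  exact Measurable.ite measurableSet_diagonal (h2.comp measurable_fst)
    (((h1.comp measurable_fst).sub (h1.comp measurable_snd)).div
      (measurable_fst.sub measurable_snd))

lemma deltaF_mul_sub {x y : ℝ} (h : x ≠ y) :
    deltaF f x y * (x - y) = deriv f x - deriv f y := by
  rw [deltaF, if_neg h, div_mul_cancel₀ _ (sub_ne_zero.mpr h)]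

lemma deriv_deriv_comp_neg (x : ℝ) :
    deriv (deriv fun x => f (-x)) x = deriv (deriv f) (-x) := by
  have h : deriv (fun x => f (-x)) = fun x => -deriv f (-x) := funext (deriv_comp_neg f)
  rw [h, deriv.fun_neg, deriv_comp_neg (deriv f), neg_neg]

lemma deltaF_comp_neg (x y : ℝ) :
    deltaF (fun x => f (-x)) x y = deltaF f (-x) (-y) := by
  simp only [deltaF, deriv_deriv_comp_neg, deriv_comp_neg f, neg_inj]
  split_ifs
  · rfl
  · rw [← neg_div_neg_eq]
    congr 1 <;> ring

lemma CbTwo.comp_neg (hf : CbTwo f) : CbTwo fun x => f (-x) := by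
  obtain ⟨hf2, C, hC⟩ := hf
  refine ⟨hf2.comp contDiff_neg, C, fun x => ?_⟩
  rw [deriv_deriv_comp_neg, deriv_comp_neg f, abs_neg]
  exact hC (-x)

end DeltaF

lemma deriv_comp_mul_add {g : ℝ → ℝ} (hg : Differentiable ℝ g) (c d : ℝ) :
    deriv (fun x => g (c * x + d)) = fun x => c * deriv g (c * x + d) := by
  funext x
  have h := (hg (c * x + d)).hasDerivAt.comp x (((hasDerivAt_id x).const_mul c).add_const d)
  simpa [mul_comm, Function.comp_def] using h.deriv

lemma CbTwo.comp_mul_add {f : ℝ → ℝ} (hf : CbTwo f) (c d : ℝ) :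
    CbTwo fun x => f (c * x + d) := by
  obtain ⟨hf2, C, hC⟩ := hf
  have hC0 : 0 ≤ C := (abs_nonneg _).trans (hC 0).1
  refine ⟨hf2.comp (by fun_prop), C * (1 + |c|) ^ 2, fun x => ?_⟩
  simp only [deriv_comp_mul_add (hf2.differentiable (by norm_num)), deriv_const_mul_field',
    deriv_comp_mul_add hf2.differentiable_deriv_two, abs_mul]
  obtain ⟨h0, h1, h2⟩ := hC (c * x + d)
  have hc := abs_nonneg c
  refine ⟨?_, ?_, ?_⟩ <;> nlinarith [mul_nonneg hC0 hc, mul_nonneg (mul_nonneg hC0 hc) hc,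
    mul_le_mul_of_nonneg_left h1 hc, mul_le_mul_of_nonneg_left h2 (mul_nonneg hc hc)]

lemma hasCompactSupport_deriv_smoothTransition :
    HasCompactSupport (deriv Real.smoothTransition) := by
  refine HasCompactSupport.intro (isCompact_Icc (a := 0) (b := 1)) fun x hx => ?_
  rcases not_and_or.mp hx with hx | hx <;> rw [not_le] at hx
  · have : Real.smoothTransition =ᶠ[𝓝 x] fun _ => 0 := eventually_of_mem (Iio_mem_nhds hx)
      fun y hy => Real.smoothTransition.zero_of_nonpos (le_of_lt hy)
    rw [this.deriv_eq, deriv_const]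
  · have : Real.smoothTransition =ᶠ[𝓝 x] fun _ => 1 := eventually_of_mem (Ioi_mem_nhds hx)
      fun y hy => Real.smoothTransition.one_of_one_le (le_of_lt hy)
    rw [this.deriv_eq, deriv_const]

lemma cbTwo_smoothTransition : CbTwo Real.smoothTransition := by
  have hs : ContDiff ℝ 2 Real.smoothTransition := Real.smoothTransition.contDiff
  obtain ⟨C₁, hC₁⟩ := (hs.continuous_deriv (by norm_num)).bounded_above_of_compact_support
    hasCompactSupport_deriv_smoothTransition
  obtain ⟨C₂, hC₂⟩ := ((show ContDiff ℝ (1 + 1) _ from hs).deriv'.continuous_deriv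
    le_rfl).bounded_above_of_compact_support hasCompactSupport_deriv_smoothTransition.deriv
  refine ⟨hs, max 1 (max C₁ C₂), fun x => ⟨?_, ?_, ?_⟩⟩
  · rw [abs_of_nonneg (Real.smoothTransition.nonneg x)]
    exact (Real.smoothTransition.le_one x).trans (le_max_left _ _)
  · exact (hC₁ x).trans ((le_max_left _ _).trans (le_max_right _ _))
  · exact (hC₂ x).trans ((le_max_right _ _).trans (le_max_right _ _))

lemma measurable_integral_Ioc (g : ℝ → ℝ) (a : ℝ) :
    Measurable fun t => ∫ s in Ioc a t, g s := by
  classical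
  set F := fun t => ∫ s in Ioc a t, g s
  set S := {t | a ≤ t ∧ IntegrableOn g (Ioc a t)}
  have hS : S.OrdConnected := ⟨fun x hx y hy z hz =>
    ⟨hx.1.trans hz.1, hy.2.mono_set (Ioc_subset_Ioc_right hz.2)⟩⟩
  have hcont : ContinuousOn F S := by
    intro t ht
    have hprim : ∀ b ∈ S, ContinuousOn F (Icc a b) := fun b hb =>
      intervalIntegral.continuousOn_primitive
        ((integrableOn_Icc_iff_integrableOn_Ioc (f := g)).mpr hb.2)
    by_cases hmax : ∃ b ∈ S, t < b
    · obtain ⟨b, hb, htb⟩ := hmax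
      refine ((hprim b hb) t ⟨ht.1, htb.le⟩).mono_of_mem_nhdsWithin ?_
      exact mem_nhdsWithin_iff_exists_mem_nhds_inter.mpr
        ⟨Iio b, Iio_mem_nhds htb, fun x hx => ⟨hx.2.1, le_of_lt hx.1⟩⟩
    · push Not at hmax
      exact ((hprim t ht) t ⟨ht.1, le_rfl⟩).mono fun x hx => ⟨hx.1, hmax x hx⟩
  have hF : F = S.piecewise F 0 := by
    funext t
    by_cases ht : t ∈ S
    · simp [ht]
    · simp only [piecewise_eq_of_notMem _ _ _ ht, Pi.zero_apply]
      by_cases hat : a ≤ t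
      · exact integral_undef fun h => ht ⟨hat, h⟩
      · simp [F, Ioc_eq_empty fun h => hat h.le]
  rw [hF]
  exact hcont.measurable_piecewise continuousOn_const hS.measurableSet

lemma tendsto_smoothTransition_indicator_Iic (a x : ℝ) :
    Tendsto (fun n : ℕ => Real.smoothTransition (-(n : ℝ) * x + ((n : ℝ) * a + 1))) atTop
      (𝓝 ((Iic a).indicator 1 x)) := by
  have harg : ∀ n : ℕ, -(n : ℝ) * x + ((n : ℝ) * a + 1) = n * (a - x) + 1 := fun n => by ring
  simp only [harg]
  by_cases hx : x ≤ a
  · rw [indicator_of_mem (mem_Iic.mpr hx), Pi.one_apply]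
    refine tendsto_const_nhds.congr fun n => ?_
    exact (Real.smoothTransition.one_of_one_le (by nlinarith [n.cast_nonneg (α := ℝ)])).symm
  · rw [indicator_of_notMem (notMem_Iic.mpr (not_le.mp hx))]
    have hlim := (tendsto_natCast_atTop_atTop (R := ℝ)).atTop_mul_const_of_neg
      (sub_neg.mpr (not_le.mp hx))
    refine tendsto_const_nhds.congr' ?_
    filter_upwards [hlim.eventually_le_atBot (-1)] with n hn
    exact (Real.smoothTransition.zero_of_nonpos (by linarith)).symm

lemma measurable_of_measurable_integral_cbTwo {X : Type*} [MeasurableSpace X]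
    {κ : X → Measure ℝ} [∀ x, IsProbabilityMeasure (κ x)]
    (h : ∀ φ, CbTwo φ → Measurable fun x => ∫ y, φ y ∂κ x) : Measurable κ := by
  refine .measure_of_isPiSystem_of_isProbabilityMeasure (borel_eq_generateFrom_Iic ℝ)
    isPiSystem_Iic ?_
  rintro _ ⟨a, rfl⟩
  set φ : ℕ → ℝ → ℝ := fun n y => Real.smoothTransition (-(n : ℝ) * y + ((n : ℝ) * a + 1))
  have hφ : ∀ n, CbTwo (φ n) := fun n => cbTwo_smoothTransition.comp_mul_add _ _
  have hlim : ∀ x, Tendsto (fun n => ∫ y, φ n y ∂κ x) atTop (𝓝 ((κ x).real (Iic a))) := by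
    intro x
    rw [← integral_indicator_one measurableSet_Iic]
    refine tendsto_integral_of_dominated_convergence (fun _ => 1)
      (fun n => (hφ n).1.continuous.aestronglyMeasurable) (integrable_const 1)
      (fun n => ae_of_all _ fun y => ?_)
      (ae_of_all _ (tendsto_smoothTransition_indicator_Iic a))
    rw [Real.norm_eq_abs, abs_of_nonneg (Real.smoothTransition.nonneg _)]
    exact Real.smoothTransition.le_one _
  have hreal : Measurable fun x => (κ x).real (Iic a) :=
    measurable_of_tendsto_metrizable (fun n => h _ (hφ n)) (tendsto_pi_nhds.mpr hlim)
  convert ENNReal.measurable_ofReal.comp hreal using 1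
  exact funext fun x => (ofReal_measureReal (measure_ne_top _ _)).symm

section MeasurableFamily

variable {X Y : Type*} [MeasurableSpace X] [MeasurableSpace Y] {κ : X → Measure Y}
  [∀ x, IsProbabilityMeasure (κ x)]

lemma measurable_integral_of_measurable_measure (hκ : Measurable κ) {w : Y → ℝ}
    (hw : Measurable w) : Measurable fun x => ∫ y, w y ∂κ x := by
  let k : ProbabilityTheory.Kernel X Y := ⟨κ, hκ⟩
  have : ProbabilityTheory.IsMarkovKernel k := ⟨fun x => ‹∀ x, IsProbabilityMeasure (κ x)› x⟩
  exact ((hw.comp measurable_snd).stronglyMeasurable.integral_kernel_prod_right'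
    (κ := k)).measurable

lemma measurable_integral_integral_of_measurable_measure (hκ : Measurable κ)
    {K : Y → Y → ℝ} (hK : Measurable (Function.uncurry K)) :
    Measurable fun x => ∫ y, ∫ z, K y z ∂κ x ∂κ x := by
  let k : ProbabilityTheory.Kernel X Y := ⟨κ, hκ⟩
  have : ProbabilityTheory.IsMarkovKernel k := ⟨fun x => ‹∀ x, IsProbabilityMeasure (κ x)› x⟩
  have hinner : StronglyMeasurable fun p : X × Y => ∫ z, K p.2 z ∂κ p.1 :=
    (hK.comp ((measurable_snd.comp measurable_fst).prodMk measurable_snd)).stronglyMeasurable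
      |>.integral_kernel_prod_right' (κ := k.prodMkRight Y)
  exact (hinner.integral_kernel_prod_right' (κ := k)).measurable

end MeasurableFamily

lemma intervalIntegrable_comp_mul_of_measurable_comp_max {F : ℝ → ℝ} {c t B : ℝ} (hc : 0 < c)
    (ht : 0 ≤ t) (hF : Measurable fun s => F (max s 0)) (hB : ∀ s ∈ Ioc 0 (c * t), |F s| ≤ B) :
    IntervalIntegrable (fun u => F (c * u)) volume 0 t := by
  have hF' : IntervalIntegrable F volume 0 (c * t) := by
    rw [intervalIntegrable_iff_integrableOn_Ioc_of_le (by positivity)]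
    refine IntegrableOn.of_bound measure_Ioc_lt_top ?_ B
      ((ae_restrict_mem measurableSet_Ioc).mono fun s hs => hB s hs)
    refine hF.aestronglyMeasurable.congr ((ae_restrict_mem measurableSet_Ioc).mono fun s hs => ?_)
    simp [max_eq_left (le_of_lt hs.1)]
  simpa [hc.ne'] using hF'.comp_mul_left (c := c)

lemma intervalIntegral_zero_mul (F : ℝ → ℝ) (c t : ℝ) :
    ∫ s in (0 : ℝ)..c * t, F s = c * ∫ u in (0 : ℝ)..t, F (c * u) := by
  simp

section LinearGrowth

variable {m m₁ m₂ : Measure ℝ}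

lemma integrable_of_continuous_of_abs_le [IsFiniteMeasure m] {w : ℝ → ℝ} (hw : Continuous w)
    {C : ℝ} (hC : ∀ x, |w x| ≤ C) : Integrable w m :=
  .of_bound hw.aestronglyMeasurable C (ae_of_all _ hC)

lemma integrable_of_abs_le_add_mul_abs [IsFiniteMeasure m] (hm : Integrable (fun x => |x|) m)
    {w : ℝ → ℝ} (hw : AEStronglyMeasurable w m) {a b : ℝ} (h : ∀ x, |w x| ≤ a + b * |x|) :
    Integrable w m :=
  Integrable.mono' (g := fun x => a + b * |x|) ((integrable_const a).add (hm.const_mul b)) hw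
    (ae_of_all _ fun x => (Real.norm_eq_abs _).trans_le (h x))

lemma abs_integral_le_add_mul_integral_abs [IsProbabilityMeasure m]
    (hm : Integrable (fun x => |x|) m) {w : ℝ → ℝ} {a b : ℝ} (h : ∀ x, |w x| ≤ a + b * |x|) :
    |∫ x, w x ∂m| ≤ a + b * ∫ x, |x| ∂m := by
  have hint : Integrable (fun x => a + b * |x|) m := (integrable_const a).add (hm.const_mul b)
  calc |∫ x, w x ∂m| ≤ ∫ x, (a + b * |x|) ∂m :=
        norm_integral_le_of_norm_le (f := w) hint (ae_of_all _ h)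
    _ = a + b * ∫ x, |x| ∂m := by
      rw [integral_add (integrable_const a) (hm.const_mul b), integral_const, integral_const_mul,
        probReal_univ, one_smul]

variable {K : ℝ → ℝ → ℝ} {C : ℝ}

lemma abs_integral_integral_le [IsProbabilityMeasure m] (hm : Integrable (fun x => |x|) m)
    (hKC : ∀ x y, |K x y| ≤ C * (|x| + |y|)) :
    |∫ x, ∫ y, K x y ∂m ∂m| ≤ 2 * C * ∫ x, |x| ∂m := by
  have hinner : ∀ x, |∫ y, K x y ∂m| ≤ C * ∫ y, |y| ∂m + C * |x| := fun x =>
    (abs_integral_le_add_mul_integral_abs (a := C * |x|) (b := C) hm fun y => by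
      linarith [hKC x y]).trans_eq (by ring)
  linarith [abs_integral_le_add_mul_integral_abs hm hinner]

lemma integrable_integral_of_abs_le [IsProbabilityMeasure m₁] [IsProbabilityMeasure m₂]
    (h₁ : Integrable (fun x => |x|) m₁) (h₂ : Integrable (fun x => |x|) m₂)
    (hK : Measurable (Function.uncurry K)) (hKC : ∀ x y, |K x y| ≤ C * (|x| + |y|)) :
    Integrable (fun x => ∫ y, K x y ∂m₂) m₁ := by
  refine integrable_of_abs_le_add_mul_abs (a := C * ∫ y, |y| ∂m₂) (b := C) h₁
    hK.stronglyMeasurable.integral_prod_right.aestronglyMeasurable fun x => ?_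
  exact (abs_integral_le_add_mul_integral_abs (a := C * |x|) (b := C) h₂ fun y => by
    linarith [hKC x y]).trans_eq (by ring)

lemma integral_integral_eq_add_of_ae [IsProbabilityMeasure m₁] [IsProbabilityMeasure m₂]
    {a b : ℝ → ℝ} (ha : Integrable a m₁) (hb : Integrable b m₂)
    (hK : ∀ᵐ x ∂m₁, ∀ᵐ y ∂m₂, K x y = a x + b y) :
    ∫ x, ∫ y, K x y ∂m₂ ∂m₁ = ∫ x, a x ∂m₁ + ∫ y, b y ∂m₂ := by
  have hinner : ∀ᵐ x ∂m₁, ∫ y, K x y ∂m₂ = a x + ∫ y, b y ∂m₂ := by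
    filter_upwards [hK] with x hx
    rw [integral_congr_ae hx, integral_add (integrable_const _) hb, integral_const,
      probReal_univ, one_smul]
  rw [integral_congr_ae hinner, integral_add ha (integrable_const _), integral_const,
    probReal_univ, one_smul]

end LinearGrowth

noncomputable def reflectedMixture (p : ℝ) (m₁ : Measure ℝ) (q : ℝ) (m₂ : Measure ℝ) :
    Measure ℝ :=
  ENNReal.ofReal p • m₁ + ENNReal.ofReal q • Measure.map (fun x : ℝ => -x) m₂

section ReflectedMixture

variable {m₁ m₂ : Measure ℝ} {p q : ℝ}

lemma isProbabilityMeasure_reflectedMixture [IsProbabilityMeasure m₁] [IsProbabilityMeasure m₂]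
    (hp : 0 ≤ p) (hq : 0 ≤ q) (hpq : p + q = 1) :
    IsProbabilityMeasure (reflectedMixture p m₁ q m₂) := by
  constructor
  rw [reflectedMixture, Measure.add_apply, Measure.smul_apply, Measure.smul_apply,
    Measure.map_apply measurable_neg MeasurableSet.univ, preimage_univ, measure_univ,
    measure_univ, smul_eq_mul, smul_eq_mul, mul_one, mul_one, ← ENNReal.ofReal_add hp hq, hpq,
    ENNReal.ofReal_one]

lemma reflectedMixture_dirac_zero (hp : 0 ≤ p) (hq : 0 ≤ q) (hpq : p + q = 1) :
    reflectedMixture p (Measure.dirac 0) q (Measure.dirac 0) = Measure.dirac 0 := by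
  rw [reflectedMixture, Measure.map_dirac' measurable_neg, neg_zero, ← add_smul,
    ← ENNReal.ofReal_add hp hq, hpq, ENNReal.ofReal_one, one_smul]

lemma reflectedMixture_Iio_zero [IsProbabilityMeasure m₁] (h₁ : m₁ (Ioi 0) = 1)
    (h₂ : m₂ (Ioi 0) = 1) : reflectedMixture p m₁ q m₂ (Iio 0) = ENNReal.ofReal q := by
  have hnull : m₁ (Iio 0) = 0 := by
    refine measure_mono_null (t := (Ioi 0)ᶜ) (fun x (hx : x < 0) => not_lt.mpr hx.le) ?_
    exact (prob_compl_eq_zero_iff measurableSet_Ioi).mpr h₁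
  rw [reflectedMixture, Measure.add_apply, Measure.smul_apply, Measure.smul_apply,
    Measure.map_apply measurable_neg measurableSet_Iio, show (fun x : ℝ => -x) ⁻¹' Iio 0 = Ioi 0
      by ext; simp, hnull, h₂, smul_eq_mul, smul_eq_mul, mul_zero, mul_one,
    zero_add]

lemma integral_reflectedMixture (hp : 0 ≤ p) (hq : 0 ≤ q) {w : ℝ → ℝ}
    (h₁ : Integrable w m₁) (h₂ : Integrable (fun x => w (-x)) m₂) :
    ∫ x, w x ∂reflectedMixture p m₁ q m₂ = p * ∫ x, w x ∂m₁ + q * ∫ x, w (-x) ∂m₂ := by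
  have h₂' : Integrable w (Measure.map (fun x : ℝ => -x) m₂) :=
    (measurableEmbedding_neg.integrable_map_iff).mpr h₂
  rw [reflectedMixture, integral_add_measure (h₁.smul_measure ENNReal.ofReal_ne_top)
      (h₂'.smul_measure ENNReal.ofReal_ne_top), integral_smul_measure, integral_smul_measure,
    ENNReal.toReal_ofReal hp, ENNReal.toReal_ofReal hq, measurableEmbedding_neg.integral_map]
  rfl

variable {K : ℝ → ℝ → ℝ} {C : ℝ}

lemma integral_integral_reflectedMixture [IsProbabilityMeasure m₁] [IsProbabilityMeasure m₂]
    (h₁ : Integrable (fun x => |x|) m₁) (h₂ : Integrable (fun x => |x|) m₂)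
    (hp : 0 ≤ p) (hq : 0 ≤ q)
    (hK : Measurable (Function.uncurry K)) (hKC : ∀ x y, |K x y| ≤ C * (|x| + |y|)) :
    ∫ x, ∫ y, K x y ∂reflectedMixture p m₁ q m₂ ∂reflectedMixture p m₁ q m₂
      = p ^ 2 * ∫ x, ∫ y, K x y ∂m₁ ∂m₁ + p * q * ∫ x, ∫ y, K x (-y) ∂m₂ ∂m₁
        + q * p * ∫ x, ∫ y, K (-x) y ∂m₁ ∂m₂ + q ^ 2 * ∫ x, ∫ y, K (-x) (-y) ∂m₂ ∂m₂ := by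
  have hneg₁ : Measurable (Function.uncurry fun x y => K x (-y)) :=
    hK.comp (measurable_fst.prodMk measurable_snd.neg)
  have hneg₂ : Measurable (Function.uncurry fun x y => K (-x) y) :=
    hK.comp (measurable_fst.neg.prodMk measurable_snd)
  have hneg₁₂ : Measurable (Function.uncurry fun x y => K (-x) (-y)) :=
    hK.comp (measurable_fst.neg.prodMk measurable_snd.neg)
  have hKC₁ : ∀ x y, |K x (-y)| ≤ C * (|x| + |y|) := fun x y => by simpa using hKC x (-y)
  have hKC₂ : ∀ x y, |K (-x) y| ≤ C * (|x| + |y|) := fun x y => by simpa using hKC (-x) y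
  have hKC₁₂ : ∀ x y, |K (-x) (-y)| ≤ C * (|x| + |y|) := fun x y => by
    simpa using hKC (-x) (-y)
  have hsection : ∀ {m : Measure ℝ} [IsProbabilityMeasure m], Integrable (fun x => |x|) m →
      ∀ {L : ℝ → ℝ → ℝ}, Measurable (Function.uncurry L) →
        (∀ x y, |L x y| ≤ C * (|x| + |y|)) → ∀ x, Integrable (L x) m :=
    fun hm _ hL hLC x => integrable_of_abs_le_add_mul_abs (a := C * |x|) (b := C) hm
      (hL.comp measurable_prodMk_left).aestronglyMeasurable fun y => by linarith [hLC x y]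
  have hinner : ∀ x, ∫ y, K x y ∂reflectedMixture p m₁ q m₂
      = p * ∫ y, K x y ∂m₁ + q * ∫ y, K x (-y) ∂m₂ := fun x =>
    integral_reflectedMixture hp hq (hsection h₁ hK hKC x) (hsection h₂ hneg₁ hKC₁ x)
  have i₁ := integrable_integral_of_abs_le h₁ h₁ hK hKC
  have i₂ := integrable_integral_of_abs_le h₁ h₂ hneg₁ hKC₁
  have i₃ := integrable_integral_of_abs_le h₂ h₁ hneg₂ hKC₂
  have i₄ := integrable_integral_of_abs_le h₂ h₂ hneg₁₂ hKC₁₂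
  simp only [hinner]
  rw [integral_reflectedMixture (w := fun x => p * ∫ y, K x y ∂m₁ + q * ∫ y, K x (-y) ∂m₂) hp hq
      ((i₁.const_mul p).add (i₂.const_mul q)) ((i₃.const_mul p).add (i₄.const_mul q)),
    integral_add (i₁.const_mul p) (i₂.const_mul q), integral_add (i₃.const_mul p) (i₄.const_mul q),
    integral_const_mul, integral_const_mul, integral_const_mul, integral_const_mul]
  ring

lemma integral_integral_deltaF_mul_abs_reflectedMixture {f : ℝ → ℝ} (hf : CbTwo f)
    [IsProbabilityMeasure m₁] [IsProbabilityMeasure m₂]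
    (h₁ : Integrable (fun x => |x|) m₁) (h₂ : Integrable (fun x => |x|) m₂)
    (hpos₁ : ∀ᵐ x ∂m₁, 0 < x) (hpos₂ : ∀ᵐ x ∂m₂, 0 < x) (hp : 0 ≤ p) (hq : 0 ≤ q) :
    ∫ x, ∫ y, deltaF f x y * (|x| + |y|) ∂reflectedMixture p m₁ q m₂ ∂reflectedMixture p m₁ q m₂
      = p ^ 2 * ∫ x, ∫ y, deltaF f x y * (x + y) ∂m₁ ∂m₁
        + q ^ 2 * ∫ x, ∫ y, deltaF f (-x) (-y) * (x + y) ∂m₂ ∂m₂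
        + 2 * p * q * (∫ x, deriv f x ∂m₁ - ∫ x, deriv f (-x) ∂m₂) := by
  obtain ⟨hf2, C, hC⟩ := hf
  have hK : Measurable (Function.uncurry fun x y => deltaF f x y * (|x| + |y|)) :=
    (measurable_deltaF hf2).mul (measurable_fst.abs.add measurable_snd.abs)
  have hKC : ∀ x y, |deltaF f x y * (|x| + |y|)| ≤ C * (|x| + |y|) := fun x y =>
    abs_deltaF_mul_le hf2 (fun x => (hC x).2.2) (abs_of_nonneg (by positivity)).le
  have hd : Continuous (deriv f) := hf2.continuous_deriv (by norm_num)
  have hd₁ : Integrable (deriv f) m₁ := integrable_of_continuous_of_abs_le hd fun x => (hC x).2.1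
  have hd₂ : Integrable (fun x => -deriv f (-x)) m₂ :=
    integrable_of_continuous_of_abs_le (hd.comp continuous_neg).neg fun x => by
      simpa using (hC (-x)).2.1
  have hcross₁ : ∫ x, ∫ y, deltaF f x (-y) * (|x| + |-y|) ∂m₂ ∂m₁
      = ∫ x, deriv f x ∂m₁ + ∫ y, -deriv f (-y) ∂m₂ := by
    refine integral_integral_eq_add_of_ae hd₁ hd₂ ?_
    filter_upwards [hpos₁] with x hx
    filter_upwards [hpos₂] with y hy
    rw [abs_of_pos hx, abs_neg, abs_of_pos hy, ← sub_neg_eq_add x y,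
      deltaF_mul_sub (by linarith : x ≠ -y), sub_eq_add_neg]
  have hcross₂ : ∫ x, ∫ y, deltaF f (-x) y * (|-x| + |y|) ∂m₁ ∂m₂
      = ∫ x, -deriv f (-x) ∂m₂ + ∫ y, deriv f y ∂m₁ := by
    refine integral_integral_eq_add_of_ae hd₂ hd₁ ?_
    filter_upwards [hpos₂] with x hx
    filter_upwards [hpos₁] with y hy
    rw [abs_neg, abs_of_pos hx, abs_of_pos hy, show x + y = -(-x - y) by ring, mul_neg,
      deltaF_mul_sub (by linarith : -x ≠ y)]
    ring
  have hdiag₁ : ∫ x, ∫ y, deltaF f x y * (|x| + |y|) ∂m₁ ∂m₁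
      = ∫ x, ∫ y, deltaF f x y * (x + y) ∂m₁ ∂m₁ := by
    refine integral_congr_ae ?_
    filter_upwards [hpos₁] with x hx
    refine integral_congr_ae ?_
    filter_upwards [hpos₁] with y hy
    rw [abs_of_pos hx, abs_of_pos hy]
  have hdiag₂ : ∫ x, ∫ y, deltaF f (-x) (-y) * (|-x| + |-y|) ∂m₂ ∂m₂
      = ∫ x, ∫ y, deltaF f (-x) (-y) * (x + y) ∂m₂ ∂m₂ := by
    refine integral_congr_ae ?_
    filter_upwards [hpos₂] with x hx
    refine integral_congr_ae ?_
    filter_upwards [hpos₂] with y hy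
    rw [abs_neg, abs_neg, abs_of_pos hx, abs_of_pos hy]
  rw [integral_integral_reflectedMixture h₁ h₂ hp hq hK hKC, hdiag₁, hcross₁, hcross₂, hdiag₂,
    integral_neg]
  ring

end ReflectedMixture


section Equation

variable {ν : ℝ → Measure ℝ} [∀ t, IsProbabilityMeasure (ν t)]

/-- The equation writes `∫ φ dν_s` as `φ 0` plus primitives in `s`, and a primitive is measurable
whether or not its integrand is integrable. Time is clamped at `0` because the equation says
nothing about `ν_s` for `s < 0`. -/
lemma measurable_measure_max_of_equation
    (hνeq : ∀ f : ℝ → ℝ, CbTwo f → ∀ t : ℝ, 0 ≤ t →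
      ∫ x, f x ∂(ν t) = f 0
        + (∫ s in (0:ℝ)..t, ∫ x, deriv f x ∂(ν s))
        + (1 / 2) * ∫ s in (0:ℝ)..t, ∫ x, ∫ y, deltaF f x y * (x + y) ∂(ν s) ∂(ν s)) :
    Measurable fun s => ν (max s 0) := by
  refine measurable_of_measurable_integral_cbTwo fun φ hφ => ?_
  have hmax : Measurable fun s : ℝ => max s 0 := measurable_id.max measurable_const
  have heq : (fun s => ∫ x, φ x ∂ν (max s 0)) = fun s => φ 0
      + (∫ u in Ioc 0 (max s 0), ∫ x, deriv φ x ∂ν u)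
      + 1 / 2 * ∫ u in Ioc 0 (max s 0), ∫ x, ∫ y, deltaF φ x y * (x + y) ∂ν u ∂ν u := by
    funext s
    rw [hνeq φ hφ _ (le_max_right s 0), intervalIntegral.integral_of_le (le_max_right s 0),
      intervalIntegral.integral_of_le (le_max_right s 0)]
  rw [heq]
  exact (measurable_const.add ((measurable_integral_Ioc _ 0).comp hmax)).add
    (measurable_const.mul ((measurable_integral_Ioc _ 0).comp hmax))

lemma intervalIntegrable_integral_comp_mul (hν : Measurable fun s => ν (max s 0)) {c t : ℝ}
    (hc : 0 < c) (ht : 0 ≤ t) {w : ℝ → ℝ} (hw : Continuous w) {C : ℝ} (hC : ∀ x, |w x| ≤ C) :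
    IntervalIntegrable (fun u => ∫ x, w x ∂ν (c * u)) volume 0 t :=
  intervalIntegrable_comp_mul_of_measurable_comp_max (F := fun s => ∫ x, w x ∂ν s) hc ht
    (measurable_integral_of_measurable_measure hν hw.measurable) fun s _ => by
      simpa using norm_integral_le_of_norm_le_const (μ := ν s) (f := w) (ae_of_all _ hC)

lemma intervalIntegrable_integral_integral_comp_mul (hν : Measurable fun s => ν (max s 0))
    (hνint : ∀ s : ℝ, 0 ≤ s → Integrable (fun x => |x|) (ν s)) {c t M : ℝ} (hc : 0 < c)
    (ht : 0 ≤ t) (hM : ∀ s ∈ Ioc 0 (c * t), ∫ x, |x| ∂(ν s) ≤ M) {K : ℝ → ℝ → ℝ}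
    (hK : Measurable (Function.uncurry K)) {C : ℝ} (hC : 0 ≤ C)
    (hKC : ∀ x y, |K x y| ≤ C * (|x| + |y|)) :
    IntervalIntegrable (fun u => ∫ x, ∫ y, K x y ∂ν (c * u) ∂ν (c * u)) volume 0 t :=
  intervalIntegrable_comp_mul_of_measurable_comp_max (F := fun s => ∫ x, ∫ y, K x y ∂ν s ∂ν s)
    hc ht (measurable_integral_integral_of_measurable_measure hν hK) fun s hs =>
      (abs_integral_integral_le (hνint s hs.1.le) hKC).trans
        (mul_le_mul_of_nonneg_left (hM s hs) (by positivity))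

lemma ae_pos_of_measure_Ioi_eq_one {m : Measure ℝ} [IsProbabilityMeasure m]
    (hm : m (Ioi 0) = 1) : ∀ᵐ x ∂m, 0 < x :=
  (ae_iff_measure_eq measurableSet_Ioi.nullMeasurableSet).mpr (by rw [measure_univ]; exact hm)

variable {p q : ℝ} {μ : ℝ → Measure ℝ} {f : ℝ → ℝ} {t : ℝ}

lemma integral_deriv_reflectedMixture (hp : 0 ≤ p) (hq : 0 ≤ q)
    (hμ : ∀ t, μ t = reflectedMixture p (ν (p * t)) q (ν (q * t))) (hf : CbTwo f)
    (ha : IntervalIntegrable (fun u => ∫ x, deriv f x ∂ν (p * u)) volume 0 t)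
    (hb : IntervalIntegrable (fun u => ∫ x, deriv f (-x) ∂ν (q * u)) volume 0 t) :
    ∫ s in (0:ℝ)..t, ∫ x, deriv f x ∂(μ s)
      = p * (∫ u in (0:ℝ)..t, ∫ x, deriv f x ∂ν (p * u))
        + q * ∫ u in (0:ℝ)..t, ∫ x, deriv f (-x) ∂ν (q * u) := by
  obtain ⟨hf2, C, hC⟩ := hf
  have hd : Continuous (deriv f) := hf2.continuous_deriv (by norm_num)
  rw [← intervalIntegral.integral_const_mul, ← intervalIntegral.integral_const_mul,
    ← intervalIntegral.integral_add (ha.const_mul p) (hb.const_mul q)]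
  refine intervalIntegral.integral_congr fun u _ => ?_
  rw [hμ]
  exact integral_reflectedMixture hp hq
    (integrable_of_continuous_of_abs_le hd fun x => (hC x).2.1)
    (integrable_of_continuous_of_abs_le (hd.comp continuous_neg) fun x => (hC (-x)).2.1)

lemma integral_interaction_reflectedMixture (hνpos : ∀ t : ℝ, 0 < t → ν t (Ioi 0) = 1)
    (hνint : ∀ t : ℝ, 0 ≤ t → Integrable (fun x => |x|) (ν t)) (hp : 0 < p) (hq : 0 < q)
    (hμ : ∀ t, μ t = reflectedMixture p (ν (p * t)) q (ν (q * t))) (hf : CbTwo f) (ht : 0 ≤ t)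
    (ha : IntervalIntegrable (fun u => ∫ x, deriv f x ∂ν (p * u)) volume 0 t)
    (hb : IntervalIntegrable (fun u => ∫ x, deriv f (-x) ∂ν (q * u)) volume 0 t)
    (hA : IntervalIntegrable
      (fun u => ∫ x, ∫ y, deltaF f x y * (x + y) ∂ν (p * u) ∂ν (p * u)) volume 0 t)
    (hB : IntervalIntegrable
      (fun u => ∫ x, ∫ y, deltaF f (-x) (-y) * (x + y) ∂ν (q * u) ∂ν (q * u)) volume 0 t) :
    ∫ s in (0:ℝ)..t, ∫ x, ∫ y, deltaF f x y * (|x| + |y|) ∂(μ s) ∂(μ s)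
      = p ^ 2 * (∫ u in (0:ℝ)..t, ∫ x, ∫ y, deltaF f x y * (x + y) ∂ν (p * u) ∂ν (p * u))
        + q ^ 2 * (∫ u in (0:ℝ)..t,
            ∫ x, ∫ y, deltaF f (-x) (-y) * (x + y) ∂ν (q * u) ∂ν (q * u))
        + 2 * p * q * ((∫ u in (0:ℝ)..t, ∫ x, deriv f x ∂ν (p * u))
            - ∫ u in (0:ℝ)..t, ∫ x, deriv f (-x) ∂ν (q * u)) := by
  rw [← intervalIntegral.integral_sub ha hb, ← intervalIntegral.integral_const_mul,
    ← intervalIntegral.integral_const_mul, ← intervalIntegral.integral_const_mul,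
    ← intervalIntegral.integral_add (hA.const_mul _) (hB.const_mul _),
    ← intervalIntegral.integral_add ((hA.const_mul _).add (hB.const_mul _))
      ((ha.sub hb).const_mul _)]
  refine intervalIntegral.integral_congr_ae (ae_of_all _ fun u hu => ?_)
  rw [uIoc_of_le ht] at hu
  have hpu : 0 < p * u := mul_pos hp hu.1
  have hqu : 0 < q * u := mul_pos hq hu.1
  rw [hμ]
  exact integral_integral_deltaF_mul_abs_reflectedMixture hf (hνint _ hpu.le) (hνint _ hqu.le)
    (ae_pos_of_measure_Ioi_eq_one (hνpos _ hpu)) (ae_pos_of_measure_Ioi_eq_one (hνpos _ hqu))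
    hp.le hq.le

theorem integral_reflectedMixture_eq (hνpos : ∀ t : ℝ, 0 < t → ν t (Ioi 0) = 1)
    (hνint : ∀ t : ℝ, 0 ≤ t → Integrable (fun x => |x|) (ν t))
    (hνbd : ∀ T > (0:ℝ), ∃ M : ℝ, ∀ t ∈ Icc (0:ℝ) T, ∫ x, |x| ∂(ν t) ≤ M)
    (hνeq : ∀ f : ℝ → ℝ, CbTwo f → ∀ t : ℝ, 0 ≤ t →
      ∫ x, f x ∂(ν t) = f 0
        + (∫ s in (0:ℝ)..t, ∫ x, deriv f x ∂(ν s))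
        + (1 / 2) * ∫ s in (0:ℝ)..t, ∫ x, ∫ y, deltaF f x y * (x + y) ∂(ν s) ∂(ν s))
    (hp : 0 < p) (hq : 0 < q) (hpq : p + q = 1)
    (hμ : ∀ t, μ t = reflectedMixture p (ν (p * t)) q (ν (q * t))) (hf : CbTwo f) (ht : 0 ≤ t) :
    ∫ x, f x ∂(μ t) = f 0
      + (p - q) * (∫ s in (0:ℝ)..t, ∫ x, deriv f x ∂(μ s))
      + (1 / 2) * ∫ s in (0:ℝ)..t, ∫ x, ∫ y, deltaF f x y * (|x| + |y|) ∂(μ s) ∂(μ s) := by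
  obtain ⟨hf2, C, hC⟩ := id hf
  obtain ⟨M, hM⟩ := hνbd (t + 1) (by linarith)
  have hM' : ∀ c ≤ 1, ∀ s ∈ Ioc 0 (c * t), ∫ x, |x| ∂(ν s) ≤ M := fun c hc s hs =>
    hM s ⟨hs.1.le, by nlinarith [hs.1, hs.2]⟩
  have hν := measurable_measure_max_of_equation hνeq
  have hd : Continuous (deriv f) := hf2.continuous_deriv (by norm_num)
  have hC0 : 0 ≤ C := (abs_nonneg _).trans (hC 0).1
  have hΔ : ∀ x, |deriv (deriv f) x| ≤ C := fun x => (hC x).2.2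
  have ha := intervalIntegrable_integral_comp_mul hν hp ht hd fun x => (hC x).2.1
  have hb := intervalIntegrable_integral_comp_mul hν hq ht (hd.comp continuous_neg)
    fun x => (hC (-x)).2.1
  have hA := intervalIntegrable_integral_integral_comp_mul hν hνint hp ht (hM' p (by linarith))
    (K := fun x y => deltaF f x y * (x + y))
    ((measurable_deltaF hf2).mul (measurable_fst.add measurable_snd)) hC0
    fun x y => abs_deltaF_mul_le hf2 hΔ (abs_add_le x y)
  have hB := intervalIntegrable_integral_integral_comp_mul hν hνint hq ht (hM' q (by linarith))
    (K := fun x y => deltaF f (-x) (-y) * (x + y))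
    (((measurable_deltaF hf2).comp (measurable_fst.neg.prodMk measurable_snd.neg)).mul
      (measurable_fst.add measurable_snd)) hC0 fun x y => by
      simpa using abs_deltaF_mul_le hf2 hΔ (x := -x) (y := -y) (u := x + y)
        (by simpa using abs_add_le x y)
  have hνp := hνeq f hf (p * t) (by positivity)
  have hνq := hνeq (fun x => f (-x)) hf.comp_neg (q * t) (by positivity)
  simp only [deriv_comp_neg f, deltaF_comp_neg, integral_neg, intervalIntegral.integral_neg,
    neg_zero] at hνq
  rw [intervalIntegral_zero_mul, intervalIntegral_zero_mul] at hνp hνq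
  have hfμ : ∫ x, f x ∂(μ t) = p * ∫ x, f x ∂ν (p * t) + q * ∫ x, f (-x) ∂ν (q * t) := by
    rw [hμ]
    exact integral_reflectedMixture hp.le hq.le
      (integrable_of_continuous_of_abs_le hf2.continuous fun x => (hC x).1)
      (integrable_of_continuous_of_abs_le (hf2.continuous.comp continuous_neg) fun x => (hC _).1)
  rw [hfμ, hνp, hνq, integral_deriv_reflectedMixture hp.le hq.le hμ hf ha hb,
    integral_interaction_reflectedMixture hνpos hνint hp hq hμ hf ht ha hb hA hB]
  linear_combination f 0 * hpq

end Equation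

theorem stmt6 (α : ℝ) (hα0 : 0 ≤ α) (hα1 : α < 1)
    (lam lamStar : ℝ) (hlam : lam = (1 + α) / 2) (hlamStar : lamStar = (1 - α) / 2)
    (ν : ℝ → Measure ℝ) (hνprob : ∀ t, IsProbabilityMeasure (ν t))
    (hν0 : ν 0 = Measure.dirac 0)
    (hνpos : ∀ t : ℝ, 0 < t → ν t (Ioi 0) = 1)
    -- finite first moments, locally bounded in time
    (hνint : ∀ t : ℝ, 0 ≤ t → Integrable (fun x => |x|) (ν t))
    (hνbd : ∀ T > (0:ℝ), ∃ M : ℝ, ∀ t ∈ Icc (0:ℝ) T, ∫ x, |x| ∂(ν t) ≤ M)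
    -- `ν` solves the equation with drift 1 and kernel x+y
    (hνeq : ∀ f : ℝ → ℝ, CbTwo f → ∀ t : ℝ, 0 ≤ t →
      ∫ x, f x ∂(ν t) = f 0
        + (∫ s in (0:ℝ)..t, ∫ x, deriv f x ∂(ν s))
        + (1 / 2) * ∫ s in (0:ℝ)..t, ∫ x, ∫ y, deltaF f x y * (x + y) ∂(ν s) ∂(ν s))
    -- the mixture of `ν` and its reflection
    (μ : ℝ → Measure ℝ)
    (hμ : ∀ t : ℝ, μ t = ENNReal.ofReal lam • ν (lam * t)
      + ENNReal.ofReal lamStar • Measure.map (fun x : ℝ => -x) (ν (lamStar * t))) :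
    (∀ t, IsProbabilityMeasure (μ t)) ∧
    μ 0 = Measure.dirac 0 ∧
    -- `μ` solves the equation with drift α and kernel |x|+|y|
    (∀ f : ℝ → ℝ, CbTwo f → ∀ t : ℝ, 0 ≤ t →
      ∫ x, f x ∂(μ t) = f 0
        + α * (∫ s in (0:ℝ)..t, ∫ x, deriv f x ∂(μ s))
        + (1 / 2) * ∫ s in (0:ℝ)..t, ∫ x, ∫ y,
            deltaF f x y * (|x| + |y|) ∂(μ s) ∂(μ s)) ∧
    (∀ t : ℝ, 0 < t → μ t (Iio 0) = ENNReal.ofReal lamStar ∧ 0 < μ t (Iio 0)) := by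
  have hlam0 : 0 < lam := by rw [hlam]; linarith
  have hlamStar0 : 0 < lamStar := by rw [hlamStar]; linarith
  have hsum : lam + lamStar = 1 := by rw [hlam, hlamStar]; ring
  have hαlam : α = lam - lamStar := by rw [hlam, hlamStar]; ring
  have hμ' : ∀ t, μ t = reflectedMixture lam (ν (lam * t)) lamStar (ν (lamStar * t)) := hμ
  refine ⟨fun t => hμ' t ▸ isProbabilityMeasure_reflectedMixture hlam0.le hlamStar0.le hsum,
    ?_, fun f hf t ht => ?_, fun t ht => ?_⟩
  · rw [hμ', mul_zero, mul_zero, hν0]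
    exact reflectedMixture_dirac_zero hlam0.le hlamStar0.le hsum
  · rw [hαlam]
    exact integral_reflectedMixture_eq hνpos hνint hνbd hνeq hlam0 hlamStar0 hsum hμ' hf ht
  · rw [hμ', reflectedMixture_Iio_zero (hνpos _ (by positivity)) (hνpos _ (by positivity))]
    exact ⟨rfl, ENNReal.ofReal_pos.mpr hlamStar0⟩
end

section
/- Let m_k : [0,∞) → ℝ, k = 0,1,2,…, be locally bounded measurable functions such that m_0(t) = 1 and m_1(t) = 0 for all t ≥ 0, and for every integer k ≥ 2 and t ≥ 0, m_k(t) = (k/2) ∑_{i=0}^{k−2} ∫_0^t m_i(s) m_{k−2−i}(s) ds. Then for every n ≥ 0 and t ≥ 0: m_{2n+1}(t) = 0 and m_{2n}(t) = t^n · (1/(n+1)) · C(2n,n), where C(2n,n) is the binomial coefficient; i.e. the even moments are the Catalan numbers times t^n, the moments of the semicircle law of variance t. -/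
/-!
The recursion determines `m k` on `[0, ∞)` by strong induction on `k`, so it suffices to check
that the semicircle moments `t ^ (k / 2) * catalan (k / 2)` (and `0` for odd `k`) satisfy it.
In the convolution `∑ i, ∫ m_i m_{k-2-i}` only the terms with both indices even survive, and
for `k - 2 = 2n` they integrate to `C_a C_b t^(n+1) / (n+1)` with `a + b = n`; Segner's
recurrence sums these to `C_(n+1) t^(n+1) / (n+1)`, and the factor `k / 2 = n + 1` cancels the
denominator.
-/

open MeasureTheory Filter Set

section

open Finset

theorem Finset.Nat.sum_antidiagonal_ite_even {M : Type*} [AddCommMonoid M] (g : ℕ → ℕ → M)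
    (K : ℕ) :
    ∑ ij ∈ antidiagonal K, (if Even ij.1 ∧ Even ij.2 then g (ij.1 / 2) (ij.2 / 2) else 0) =
      if Even K then ∑ ab ∈ antidiagonal (K / 2), g ab.1 ab.2 else 0 := by
  split_ifs with hK
  · rw [← sum_filter]
    rw [Nat.even_iff] at hK
    refine sum_nbij' (fun ij => (ij.1 / 2, ij.2 / 2)) (fun ab => (2 * ab.1, 2 * ab.2))
      ?_ ?_ ?_ ?_ (fun _ _ => rfl)
    all_goals
      simp only [mem_filter, HasAntidiagonal.mem_antidiagonal, Nat.even_iff, Prod.forall,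
        Prod.mk.injEq]
      intros
      omega
  · refine sum_eq_zero fun ij hij => if_neg ?_
    rw [HasAntidiagonal.mem_antidiagonal] at hij
    rintro ⟨hi, hj⟩
    exact hK (hij ▸ hi.add hj)

noncomputable def semicircleMoment (k : ℕ) (t : ℝ) : ℝ :=
  if Even k then t ^ (k / 2) * catalan (k / 2) else 0

theorem integral_semicircleMoment_mul (i j : ℕ) (t : ℝ) :
    ∫ s in (0:ℝ)..t, semicircleMoment i s * semicircleMoment j s =
      if Even i ∧ Even j then
        catalan (i / 2) * catalan (j / 2) * (t ^ (i / 2 + j / 2 + 1) / (i / 2 + j / 2 + 1 : ℕ))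
      else 0 := by
  unfold semicircleMoment
  by_cases hij : Even i ∧ Even j
  · have hprod : ∀ s : ℝ, s ^ (i / 2) * catalan (i / 2) * (s ^ (j / 2) * catalan (j / 2)) =
        catalan (i / 2) * catalan (j / 2) * s ^ (i / 2 + j / 2) := fun s => by ring
    simp_rw [if_pos hij, if_pos hij.1, if_pos hij.2, hprod, intervalIntegral.integral_const_mul,
      integral_pow]
    push_cast
    ring
  · rcases not_and_or.mp hij with h | h <;> simp [h]

theorem semicircleMoment_two_mul (n : ℕ) (t : ℝ) :
    semicircleMoment (2 * n) t = t ^ n * catalan n := by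
  simp [semicircleMoment]

theorem semicircleMoment_two_mul_add_one (n : ℕ) (t : ℝ) :
    semicircleMoment (2 * n + 1) t = 0 := by
  simp [semicircleMoment]

theorem semicircleMoment_eq_sum_integral (k : ℕ) (hk : 2 ≤ k) (t : ℝ) :
    semicircleMoment k t = (k / 2 : ℝ) * ∑ i ∈ range (k - 1),
      ∫ s in (0:ℝ)..t, semicircleMoment i s * semicircleMoment (k - 2 - i) s := by
  obtain ⟨K, rfl⟩ : ∃ K, k = K + 2 := ⟨k - 2, by omega⟩
  have hconv : ∑ i ∈ range (K + 2 - 1),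
      ∫ s in (0:ℝ)..t, semicircleMoment i s * semicircleMoment (K + 2 - 2 - i) s =
      ∑ ij ∈ antidiagonal K,
        ∫ s in (0:ℝ)..t, semicircleMoment ij.1 s * semicircleMoment ij.2 s :=
    (Nat.sum_antidiagonal_eq_sum_range_succ
      (fun i j => ∫ s in (0:ℝ)..t, semicircleMoment i s * semicircleMoment j s) K).symm
  rw [hconv]
  simp only [integral_semicircleMoment_mul]
  rw [Nat.sum_antidiagonal_ite_even
    (fun a b => (catalan a * catalan b * (t ^ (a + b + 1) / (a + b + 1 : ℕ)) : ℝ))]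
  rcases Nat.even_or_odd' K with ⟨n, rfl | rfl⟩
  · have hsum : ∑ ab ∈ antidiagonal n, (catalan ab.1 * catalan ab.2 *
        (t ^ (ab.1 + ab.2 + 1) / (ab.1 + ab.2 + 1 : ℕ)) : ℝ) =
        catalan (n + 1) * (t ^ (n + 1) / (n + 1 : ℕ)) := by
      rw [catalan_succ', Nat.cast_sum, sum_mul]
      refine sum_congr rfl fun ab hab => ?_
      rw [HasAntidiagonal.mem_antidiagonal.mp hab]
      push_cast
      ring
    rw [if_pos (even_two_mul n), Nat.mul_div_cancel_left n two_pos, hsum, semicircleMoment,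
      if_pos (by simp [parity_simps]), show (2 * n + 2) / 2 = n + 1 by omega]
    field_simp
    push_cast
    ring
  · simp [semicircleMoment, parity_simps]

theorem eq_semicircleMoment_of_recursion (m : ℕ → ℝ → ℝ)
    (h0 : ∀ t : ℝ, 0 ≤ t → m 0 t = 1)
    (h1 : ∀ t : ℝ, 0 ≤ t → m 1 t = 0)
    (hrec : ∀ k : ℕ, 2 ≤ k → ∀ t : ℝ, 0 ≤ t →
      m k t = (k / 2 : ℝ) * ∑ i ∈ range (k - 1), ∫ s in (0:ℝ)..t, m i s * m (k - 2 - i) s)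
    (k : ℕ) {t : ℝ} (ht : 0 ≤ t) : m k t = semicircleMoment k t := by
  induction k using Nat.strong_induction_on generalizing t with
  | _ k ih =>
    match k with
    | 0 => simp [h0 t ht, semicircleMoment]
    | 1 => simp [h1 t ht, semicircleMoment]
    | k + 2 =>
      rw [hrec _ le_add_self t ht, semicircleMoment_eq_sum_integral _ le_add_self]
      congr 1
      refine sum_congr rfl fun i hi => intervalIntegral.integral_congr fun s hs => ?_
      rw [uIcc_of_le ht] at hs
      have hik : i < k + 1 := mem_range.mp hi
      rw [ih i (by omega) hs.1, ih (k + 2 - 2 - i) (by omega) hs.1]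

theorem cast_catalan_eq_one_div_mul_choose {K : Type*} [Field K] [CharZero K] (n : ℕ) :
    (catalan n : K) = 1 / (n + 1 : K) * (Nat.choose (2 * n) n : K) := by
  rw [← Nat.centralBinom_eq_two_mul_choose, ← succ_mul_catalan_eq_centralBinom]
  push_cast
  field_simp

end

theorem stmt10_general (m : ℕ → ℝ → ℝ)
    (h0 : ∀ t : ℝ, 0 ≤ t → m 0 t = 1)
    (h1 : ∀ t : ℝ, 0 ≤ t → m 1 t = 0)
    (hrec : ∀ k : ℕ, 2 ≤ k → ∀ t : ℝ, 0 ≤ t →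
      m k t = (k / 2 : ℝ) * ∑ i ∈ Finset.range (k - 1),
        ∫ s in (0:ℝ)..t, m i s * m (k - 2 - i) s) :
    ∀ n : ℕ, ∀ t : ℝ, 0 ≤ t →
      m (2 * n + 1) t = 0 ∧
      m (2 * n) t = t ^ n * (1 / (n + 1 : ℝ)) * (Nat.choose (2 * n) n : ℝ) := by
  intro n t ht
  simp only [eq_semicircleMoment_of_recursion m h0 h1 hrec _ ht, semicircleMoment_two_mul,
    semicircleMoment_two_mul_add_one, cast_catalan_eq_one_div_mul_choose, mul_assoc, and_self]

theorem stmt10 (m : ℕ → ℝ → ℝ)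
    (hmeas : ∀ k, Measurable (m k))
    (hbd : ∀ k : ℕ, ∀ T > (0:ℝ), ∃ M : ℝ, ∀ t ∈ Icc (0:ℝ) T, |m k t| ≤ M)
    (h0 : ∀ t : ℝ, 0 ≤ t → m 0 t = 1)
    (h1 : ∀ t : ℝ, 0 ≤ t → m 1 t = 0)
    (hrec : ∀ k : ℕ, 2 ≤ k → ∀ t : ℝ, 0 ≤ t →
      m k t = (k / 2 : ℝ) * ∑ i ∈ Finset.range (k - 1),
        ∫ s in (0:ℝ)..t, m i s * m (k - 2 - i) s) :
    ∀ n : ℕ, ∀ t : ℝ, 0 ≤ t →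
      m (2 * n + 1) t = 0 ∧
      m (2 * n) t = t ^ n * (1 / (n + 1 : ℝ)) * (Nat.choose (2 * n) n : ℝ) :=
  stmt10_general m h0 h1 hrec
end

section
/- Let a > 0, α ∈ ℝ, β > 0, and let (w_k)_{k≥1} be the unique sequence of real polynomials determined by w_k(0) = 1 and w_k'(x) = k ∑_{i=0}^{k−2} w_{i+1}(x) w_{k−1−i}(x) for every k ≥ 1 (the sum being empty, hence zero, for k = 1). Suppose m_k : [0,∞) → ℝ, k = 0,1,2,…, are differentiable functions with m_0(t) = 1 for all t, m_k(0) = a^k, and m_k'(t) = α k m_k(t) + β k ∑_{i=0}^{k−2} m_{i+1}(t) m_{k−1−i}(t) for every k ≥ 1 and t ≥ 0. Then m_k(t) = a^k · w_k(βt) · e^{kαt} for every k ≥ 1 and t ≥ 0. -/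
/-!
By strong induction on `k`: once `m_j = a^j w_j(β·) e^{jα·}` is known for `j < k`, the convolution
sum in the equation for `m_k` is a known forcing term `r`, so `m_k` solves the affine ODE
`x' = αk x + r(t)`. Because `w_k' = k ∑ w_{i+1} w_{k-1-i}` and the exponents and powers of `a`
add up to `k` in each product, the candidate `a^k w_k(βt) e^{kαt}` solves the same ODE with the
same initial value `a^k`, and affine ODEs have unique solutions.
-/

open Polynomial Set

theorem eq_of_hasDerivAt_affine {E : Type*} [NormedAddCommGroup E] [NormedSpace ℝ E]
    {f g r : ℝ → E} {c t₀ t : ℝ}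
    (hf : ∀ s, t₀ ≤ s → HasDerivAt f (c • f s + r s) s)
    (hg : ∀ s, t₀ ≤ s → HasDerivAt g (c • g s + r s) s)
    (h₀ : f t₀ = g t₀) (ht : t₀ ≤ t) : f t = g t := by
  have hcont : ∀ {u : ℝ → E}, (∀ s, t₀ ≤ s → HasDerivAt u (c • u s + r s) s) →
      ContinuousOn u (Icc t₀ t) := fun hu s hs => (hu s hs.1).continuousAt.continuousWithinAt
  exact ODE_solution_unique_of_mem_Icc_right (v := fun s x => c • x + r s) (s := fun _ => univ)
    (fun s _ => ((lipschitzWith_smul c).add (LipschitzWith.const (r s))).lipschitzOnWith)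
    (hcont hf) (fun s hs => (hf s hs.1).hasDerivWithinAt) (fun _ _ => mem_univ _)
    (hcont hg) (fun s hs => (hg s hs.1).hasDerivWithinAt) (fun _ _ => mem_univ _) h₀ ⟨ht, le_rfl⟩

noncomputable def scaledMoment (a α β : ℝ) (w : ℕ → ℝ[X]) (k : ℕ) (t : ℝ) : ℝ :=
  a ^ k * (w k).eval (β * t) * Real.exp (k * α * t)

theorem scaledMoment_mul (a α β : ℝ) (w : ℕ → ℝ[X]) (j l : ℕ) (t : ℝ) :
    scaledMoment a α β w j t * scaledMoment a α β w l t =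
      a ^ (j + l) * ((w j).eval (β * t) * (w l).eval (β * t)) *
        Real.exp ((j + l : ℕ) * α * t) := by
  simp only [scaledMoment, pow_add, Nat.cast_add, add_mul, Real.exp_add]
  ring

theorem hasDerivAt_scaledMoment (a α β : ℝ) (w : ℕ → ℝ[X]) (k : ℕ)
    (hder : derivative (w k) = C (k : ℝ) * ∑ i ∈ Finset.range (k - 1), w (i + 1) * w (k - 1 - i))
    (t : ℝ) :
    HasDerivAt (scaledMoment a α β w k)
      (α * k * scaledMoment a α β w k t + β * k * ∑ i ∈ Finset.range (k - 1),
        scaledMoment a α β w (i + 1) t * scaledMoment a α β w (k - 1 - i) t) t := by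
  have hpoly : HasDerivAt (fun s => (w k).eval (β * s))
      ((derivative (w k)).eval (β * t) * β) t :=
    ((w k).hasDerivAt (β * t)).comp t ((hasDerivAt_id t).const_mul β |>.congr_deriv (mul_one β))
  have hexp : HasDerivAt (fun s => Real.exp (k * α * s)) (Real.exp (k * α * t) * (k * α)) t :=
    (Real.hasDerivAt_exp _).comp t ((hasDerivAt_id t).const_mul _ |>.congr_deriv (mul_one _))
  have hsum : (k : ℝ) * ∑ i ∈ Finset.range (k - 1),
      scaledMoment a α β w (i + 1) t * scaledMoment a α β w (k - 1 - i) t =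
        a ^ k * (derivative (w k)).eval (β * t) * Real.exp (k * α * t) := by
    rw [hder, eval_mul, eval_C, eval_finsetSum, Finset.mul_sum, Finset.mul_sum, Finset.mul_sum,
      Finset.sum_mul]
    refine Finset.sum_congr rfl fun i hi => ?_
    have hik : i + 1 + (k - 1 - i) = k := by have := Finset.mem_range.mp hi; omega
    rw [scaledMoment_mul, hik, eval_mul]
    ring
  refine ((hpoly.const_mul (a ^ k)).fun_mul hexp).congr_deriv ?_
  rw [mul_assoc β, hsum, scaledMoment]
  ring

theorem stmt13_general (a α β : ℝ)
    -- the moment polynomials of the geometric matrix Brownian motion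
    (w : ℕ → Polynomial ℝ)
    (hw0 : ∀ k : ℕ, 1 ≤ k → (w k).eval 0 = 1)
    (hwder : ∀ k : ℕ, 1 ≤ k → Polynomial.derivative (w k) =
      Polynomial.C (k : ℝ) * ∑ i ∈ Finset.range (k - 1), w (i + 1) * w (k - 1 - i))
    -- the moment functions and their ODE system
    (m : ℕ → ℝ → ℝ)
    (hinit : ∀ k : ℕ, 1 ≤ k → m k 0 = a ^ k)
    (hode : ∀ k : ℕ, 1 ≤ k → ∀ t : ℝ, 0 ≤ t →
      HasDerivAt (m k)
        (α * k * m k t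
          + β * k * ∑ i ∈ Finset.range (k - 1), m (i + 1) t * m (k - 1 - i) t) t) :
    ∀ k : ℕ, 1 ≤ k → ∀ t : ℝ, 0 ≤ t →
      m k t = a ^ k * (w k).eval (β * t) * Real.exp (k * α * t) := by
  intro k
  induction k using Nat.strong_induction_on with
  | _ k ih =>
  intro hk t ht
  have hconv : ∀ s, 0 ≤ s → ∑ i ∈ Finset.range (k - 1), m (i + 1) s * m (k - 1 - i) s =
      ∑ i ∈ Finset.range (k - 1),
        scaledMoment a α β w (i + 1) s * scaledMoment a α β w (k - 1 - i) s :=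
    fun s hs => Finset.sum_congr rfl fun i hi => by
      have := Finset.mem_range.mp hi
      rw [ih (i + 1) (by omega) (by omega) s hs, ih (k - 1 - i) (by omega) (by omega) s hs]
      rfl
  refine eq_of_hasDerivAt_affine (g := scaledMoment a α β w k) (c := α * k)
    (r := fun s => β * k * ∑ i ∈ Finset.range (k - 1), m (i + 1) s * m (k - 1 - i) s)
    (hode k hk) (fun s hs => ?_) ?_ ht
  · rw [smul_eq_mul, hconv s hs]
    exact hasDerivAt_scaledMoment a α β w k (hwder k hk) s
  · simp [scaledMoment, hinit k hk, hw0 k hk]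

theorem stmt13 (a α β : ℝ) (ha : 0 < a) (hβ : 0 < β)
    -- the moment polynomials of the geometric matrix Brownian motion
    (w : ℕ → Polynomial ℝ)
    (hw0 : ∀ k : ℕ, 1 ≤ k → (w k).eval 0 = 1)
    (hwder : ∀ k : ℕ, 1 ≤ k → Polynomial.derivative (w k) =
      Polynomial.C (k : ℝ) * ∑ i ∈ Finset.range (k - 1), w (i + 1) * w (k - 1 - i))
    -- the moment functions and their ODE system
    (m : ℕ → ℝ → ℝ)
    (h0 : ∀ t : ℝ, m 0 t = 1)
    (hinit : ∀ k : ℕ, 1 ≤ k → m k 0 = a ^ k)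
    (hode : ∀ k : ℕ, 1 ≤ k → ∀ t : ℝ, 0 ≤ t →
      HasDerivAt (m k)
        (α * k * m k t
          + β * k * ∑ i ∈ Finset.range (k - 1), m (i + 1) t * m (k - 1 - i) t) t) :
    ∀ k : ℕ, 1 ≤ k → ∀ t : ℝ, 0 ≤ t →
      m k t = a ^ k * (w k).eval (β * t) * Real.exp (k * α * t) :=
  stmt13_general a α β w hw0 hwder m hinit hode
end

section
/- Let (w_k)_{k≥1} be the unique sequence of real polynomials determined by w_k(0) = 1 and w_k'(x) = k ∑_{i=0}^{k−2} w_{i+1}(x) w_{k−1−i}(x) for every k ≥ 1 (the sum being empty, hence zero, for k = 1). Then for every integer k ≥ 1 and every x ≥ 0, w_k(x) ≤ k! · 9^{k−1} · (1+x)^{k−1}. -/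
/-!
The lower bound `w_k ≥ 1` and the upper bound both come from comparing derivatives on
`[0, ∞)`. If the `w_i` with `i < k` are positive there, so is `w_k'`, hence `w_k ≥ w_k(0) = 1`.
Inductively `w_{i+1}(x) ≤ (i+1)! (1+x)^i`, and `(i+1)! (j+1)! ≤ (i+j+1)!` bounds each of the
`n` summands of `w_{n+1}'` by `n! (1+x)^(n-1)`, so `w_{n+1}' ≤ (n+1)! n (1+x)^(n-1)`, the
derivative of `(n+1)! (1+x)^n`; at `0` we have `1 ≤ (n+1)!`. Hence `w_{n+1}(x) ≤ (n+1)! (1+x)^n`.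
-/

open Polynomial
open scoped Nat

theorem Nat.succ_factorial_mul_succ_factorial_le (i j : ℕ) :
    (i + 1)! * (j + 1)! ≤ (i + j + 1)! := by
  induction j with
  | zero => simp
  | succ j ih =>
    calc (i + 1)! * (j + 1 + 1)! = (j + 2) * ((i + 1)! * (j + 1)!) := by
          rw [Nat.factorial_succ (j + 1)]; ring
      _ ≤ (i + j + 2) * (i + j + 1)! := by gcongr; omega
      _ = (i + (j + 1) + 1)! := by rw [← Nat.factorial_succ]; ring_nf

theorem Polynomial.eval_le_eval_of_derivative_le {p q : ℝ[X]} (h0 : p.eval 0 ≤ q.eval 0)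
    (hd : ∀ y, 0 ≤ y → (derivative p).eval y ≤ (derivative q).eval y) {x : ℝ} (hx : 0 ≤ x) :
    p.eval x ≤ q.eval x := by
  have hmono : MonotoneOn (fun y => (q - p).eval y) (Set.Ici 0) := by
    refine monotoneOn_of_deriv_nonneg (convex_Ici 0) (q - p).continuousOn
      (q - p).differentiableOn fun y hy => ?_
    rw [interior_Ici] at hy
    rw [Polynomial.deriv, derivative_sub, eval_sub, sub_nonneg]
    exact hd y hy.le
  have := hmono Set.self_mem_Ici hx hx
  simp only [eval_sub] at this
  linarith

structure IsConvolutionFamily (w : ℕ → ℝ[X]) : Prop where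
  eval_zero_eq_one : ∀ k : ℕ, 1 ≤ k → (w k).eval 0 = 1
  derivative_eq_sum : ∀ k : ℕ, 1 ≤ k → derivative (w k) =
    C (k : ℝ) * ∑ i ∈ Finset.range (k - 1), w (i + 1) * w (k - 1 - i)

namespace IsConvolutionFamily

variable {w : ℕ → ℝ[X]} (hw : IsConvolutionFamily w)

include hw in
theorem one_le_eval {k : ℕ} (hk : 1 ≤ k) {x : ℝ} (hx : 0 ≤ x) : 1 ≤ (w k).eval x := by
  induction k using Nat.strong_induction_on generalizing x with
  | _ k ih =>
  have hcmp := eval_le_eval_of_derivative_le (p := C 1) (q := w k)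
    (by simp [hw.eval_zero_eq_one k hk]) (fun y hy => ?_) hx
  · simpa using hcmp
  rw [derivative_C, Polynomial.eval_zero, hw.derivative_eq_sum k hk]
  simp only [eval_mul, eval_C, eval_finsetSum]
  refine mul_nonneg k.cast_nonneg (Finset.sum_nonneg fun i hi => ?_)
  rw [Finset.mem_range] at hi
  exact mul_nonneg (zero_le_one.trans (ih _ (by omega) (by omega) hy))
    (zero_le_one.trans (ih _ (by omega) (by omega) hy))

include hw in
theorem eval_le_factorial_mul (n : ℕ) {x : ℝ} (hx : 0 ≤ x) :
    (w (n + 1)).eval x ≤ (n + 1)! * (1 + x) ^ n := by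
  induction n using Nat.strong_induction_on generalizing x with
  | _ n ih =>
  refine (eval_le_eval_of_derivative_le (q := C ((n + 1)! : ℝ) * (1 + X) ^ n) ?_
    (fun y hy => ?_) hx).trans_eq (by simp)
  · simp [hw.eval_zero_eq_one, Nat.one_le_iff_ne_zero, Nat.factorial_ne_zero]
  have hterm : ∀ i ∈ Finset.range n,
      (w (i + 1)).eval y * (w (n - i)).eval y ≤ n ! * (1 + y) ^ (n - 1) := by
    intro i hi
    obtain ⟨j, rfl⟩ : ∃ j, n = i + j + 1 := ⟨n - i - 1, by simp at hi; omega⟩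
    rw [show i + j + 1 - i = j + 1 by omega, show i + j + 1 - 1 = i + j by omega]
    calc (w (i + 1)).eval y * (w (j + 1)).eval y
        ≤ ((i + 1)! * (1 + y) ^ i) * ((j + 1)! * (1 + y) ^ j) :=
          mul_le_mul (ih i (by omega) hy) (ih j (by omega) hy)
            (zero_le_one.trans (hw.one_le_eval (by omega) hy)) (by positivity)
      _ = ((i + 1)! * (j + 1)! : ℕ) * (1 + y) ^ (i + j) := by push_cast; ring
      _ ≤ (i + j + 1)! * (1 + y) ^ (i + j) := by
          gcongr; exact_mod_cast Nat.succ_factorial_mul_succ_factorial_le i j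
  rw [hw.derivative_eq_sum (n + 1) (by omega), Nat.add_sub_cancel]
  simp only [eval_mul, eval_C, eval_finsetSum]
  calc ((n + 1 : ℕ) : ℝ) * ∑ i ∈ Finset.range n, (w (i + 1)).eval y * (w (n - i)).eval y
      ≤ ((n + 1 : ℕ) : ℝ) * ∑ i ∈ Finset.range n, (n ! * (1 + y) ^ (n - 1) : ℝ) :=
        mul_le_mul_of_nonneg_left (Finset.sum_le_sum hterm) (by positivity)
    _ = (derivative (C ((n + 1)! : ℝ) * (1 + X) ^ n)).eval y := by
        simp [derivative_pow, Nat.factorial_succ]; ring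

end IsConvolutionFamily

theorem stmt14
    (w : ℕ → Polynomial ℝ)
    (hw0 : ∀ k : ℕ, 1 ≤ k → (w k).eval 0 = 1)
    (hwder : ∀ k : ℕ, 1 ≤ k → Polynomial.derivative (w k) =
      Polynomial.C (k : ℝ) * ∑ i ∈ Finset.range (k - 1), w (i + 1) * w (k - 1 - i)) :
    ∀ k : ℕ, 1 ≤ k → ∀ x : ℝ, 0 ≤ x →
      (w k).eval x ≤ (k.factorial : ℝ) * 9 ^ (k - 1) * (1 + x) ^ (k - 1) := by
  intro k hk x hx
  obtain ⟨n, rfl⟩ := Nat.exists_eq_add_of_le' hk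
  calc (w (n + 1)).eval x ≤ (n + 1)! * (1 + x) ^ n :=
        IsConvolutionFamily.eval_le_factorial_mul ⟨hw0, hwder⟩ n hx
    _ ≤ (n + 1)! * 9 ^ n * (1 + x) ^ n := by
        gcongr
        exact le_mul_of_one_le_right (by positivity) (one_le_pow₀ (by norm_num))
end

section
/- For every natural number n, ∑_{i=0}^{n} 1/C(n,i) ≤ 3, where C(n,i) denotes the binomial coefficient (n choose i). -/
theorem Nat.le_choose_of_pos_of_lt {n k : ℕ} (hk₀ : 0 < k) (hkn : k < n) : n ≤ n.choose k := by
  obtain ⟨m, rfl⟩ : ∃ m, n = m + 1 := ⟨n - 1, by omega⟩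
  obtain ⟨j, rfl⟩ : ∃ j, k = j + 1 := ⟨k - 1, by omega⟩
  have hj : j + 1 ≤ m.choose j :=
    calc j + 1 = (j + 1).choose j := (Nat.choose_succ_self_right j).symm
      _ ≤ m.choose j := Nat.choose_le_choose j (by omega)
  refine Nat.le_of_mul_le_mul_right ?_ (Nat.succ_pos j)
  calc (m + 1) * (j + 1) ≤ (m + 1) * m.choose j := Nat.mul_le_mul_left _ hj
    _ = (m + 1).choose (j + 1) * (j + 1) := Nat.add_one_mul_choose_eq m j

theorem one_div_choose_le_one_div {n k : ℕ} (hk₀ : 0 < k) (hkn : k < n) :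
    (1 : ℝ) / n.choose k ≤ 1 / n :=
  one_div_le_one_div_of_le (by exact_mod_cast hk₀.trans hkn)
    (by exact_mod_cast Nat.le_choose_of_pos_of_lt hk₀ hkn)

theorem stmt16 (n : ℕ) :
    ∑ i ∈ Finset.range (n + 1), (1 : ℝ) / (Nat.choose n i : ℝ) ≤ 3 := by
  obtain _ | _ | m := n
  · norm_num
  · norm_num [Finset.sum_range_succ]
  -- the two outer terms are `1`, each of the `m + 1` inner ones is at most `1 / (m + 2)`
  have hinner : ∑ i ∈ Finset.range (m + 1), (1 : ℝ) / (m + 2).choose (i + 1) ≤ 1 :=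
    calc ∑ i ∈ Finset.range (m + 1), (1 : ℝ) / (m + 2).choose (i + 1)
        ≤ ∑ _i ∈ Finset.range (m + 1), (1 : ℝ) / (m + 2 : ℕ) :=
          Finset.sum_le_sum fun i hi =>
            one_div_choose_le_one_div i.succ_pos (by have := Finset.mem_range.1 hi; omega)
      _ = (m + 1) / (m + 2) := by simp [div_eq_mul_inv]
      _ ≤ 1 := (div_le_one (by positivity)).2 (by linarith)
  rw [Finset.sum_range_succ, Finset.sum_range_succ']
  simp only [Nat.choose_self, Nat.choose_zero_right, Nat.cast_one, div_one]
  linarith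
end
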